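/- arXiv:2111.13822 — 7 statements merged into one kernel-verified Lean document; each statement's English description precedes it below -/
import Mathlib

section
/- Let (Z, ν) be a measure space with σ-finite measure ν and π = (π_1,…,π_K) a probability vector. Suppose for each feature map g in a family G we are given class-conditional probability densities p_g^{i,c} w.r.t. ν (i ∈ [K], c ∈ [C]) and fixed class weights γ_{i,c} ≥ 0 with Σ_c γ_{i,c} = 1; set α_c = Σ_j π_j γ_{j,c} (assumed positive) and q_g^c = Σ_i (π_i γ_{i,c}/α_c) p_g^{i,c}. Define the source loss S(g) = inf over measurable ĥ : Z → Y_Δ of Σ_{i=1}^K π_i Σ_{c=1}^C γ_{i,c} ∫ l(ĥ(z), c) p_g^{i,c}(z) dν(z), and the divergence D(g) = D^α(Q_g^1,…,Q_g^C). Then for any g_1, g_2 ∈ G, S(g_1) ≤ S(g_2) if and only if D(g_1) ≥ D(g_2); in particular, g* minimizes S over G if and only if g* maximizes D over G. -/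
open MeasureTheory

/-!
For every fixed hypothesis `ĥ`, the `α`-weighted risk against the mixtures `q^c` equals the
source risk against the `p^{i,c}`: since `α_c q^c = Σ_i π_i γ_{i,c} p^{i,c}`, the two sums differ
only by the order of summation over `i` and `c`. Taking infima, `D(g) = -S(g) + const`, where the
constant `inf_β Σ_c l(β,c) α_c` does not depend on `g`, so `D` is an order-reversing image of `S`.
-/

section Risk

variable {Z : Type*} [MeasurableSpace Z] {ν : Measure Z}

theorem mul_integral_mul_sum_div {ι : Type*} (s : Finset ι) {A : ℝ} (hA : A ≠ 0) (a : ι → ℝ)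
    {φ : Z → ℝ} {p : ι → Z → ℝ} (hint : ∀ i ∈ s, Integrable (fun z => φ z * p i z) ν) :
    A * ∫ z, φ z * ∑ i ∈ s, a i / A * p i z ∂ν = ∑ i ∈ s, a i * ∫ z, φ z * p i z ∂ν := by
  have hpull : (fun z => φ z * ∑ i ∈ s, a i / A * p i z)
      = fun z => ∑ i ∈ s, a i / A * (φ z * p i z) := by
    funext z
    rw [Finset.mul_sum]
    exact Finset.sum_congr rfl fun i _ => by ring
  rw [hpull, integral_finsetSum _ fun i hi => (hint i hi).const_mul _, Finset.mul_sum]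
  refine Finset.sum_congr rfl fun i _ => ?_
  rw [integral_const_mul]
  field_simp

variable {C : ℕ} {L : ℝ} {l : (Fin C → ℝ) → Fin C → ℝ}

theorem integrable_loss_mul_density (hl_meas : ∀ c, Measurable fun β => l β c)
    (hl_bounds : ∀ β ∈ stdSimplex ℝ (Fin C), ∀ c, 0 ≤ l β c ∧ l β c ≤ L)
    {h : Z → Fin C → ℝ} (hh_meas : Measurable h) (hh_mem : ∀ z, h z ∈ stdSimplex ℝ (Fin C))
    {p : Z → ℝ} (hp : ∫ z, p z ∂ν = 1) (c : Fin C) :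
    Integrable (fun z => l (h z) c * p z) ν := by
  refine (Integrable.of_integral_ne_zero (hp ▸ one_ne_zero)).bdd_mul (c := L)
    ((hl_meas c).comp hh_meas).aestronglyMeasurable (Filter.Eventually.of_forall fun z => ?_)
  obtain ⟨hl_nonneg, hl_le⟩ := hl_bounds (h z) (hh_mem z) c
  rwa [Real.norm_eq_abs, abs_of_nonneg hl_nonneg]

theorem mixture_risk_eq_source_risk {K : ℕ} (hl_meas : ∀ c, Measurable fun β => l β c)
    (hl_bounds : ∀ β ∈ stdSimplex ℝ (Fin C), ∀ c, 0 ≤ l β c ∧ l β c ≤ L)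
    {h : Z → Fin C → ℝ} (hh_meas : Measurable h) (hh_mem : ∀ z, h z ∈ stdSimplex ℝ (Fin C))
    (w : Fin K → ℝ) (γ : Fin K → Fin C → ℝ) {α : Fin C → ℝ} (hα : ∀ c, α c ≠ 0)
    {p : Fin K → Fin C → Z → ℝ} (hp : ∀ i c, ∫ z, p i c z ∂ν = 1) :
    ∑ c, α c * ∫ z, l (h z) c * ∑ i, w i * γ i c / α c * p i c z ∂ν
      = ∑ i, w i * ∑ c, γ i c * ∫ z, l (h z) c * p i c z ∂ν := by
  calc ∑ c, α c * ∫ z, l (h z) c * ∑ i, w i * γ i c / α c * p i c z ∂ν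
      = ∑ c, ∑ i, w i * γ i c * ∫ z, l (h z) c * p i c z ∂ν :=
        Finset.sum_congr rfl fun c _ => mul_integral_mul_sum_div _ (hα c) _ fun i _ =>
          integrable_loss_mul_density hl_meas hl_bounds hh_meas hh_mem (hp i c) c
    _ = ∑ i, w i * ∑ c, γ i c * ∫ z, l (h z) c * p i c z ∂ν := by
        rw [Finset.sum_comm]
        simp only [Finset.mul_sum, mul_assoc]

end Risk

theorem general_DI_equiv_max_divergence_general
    {Z G : Type*} [MeasurableSpace Z] (ν : Measure Z)
    (K C : ℕ)
    (L : ℝ)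
    (l : (Fin C → ℝ) → Fin C → ℝ)
    (hl_meas : ∀ i, Measurable fun β => l β i)
    (hl_bounds : ∀ β ∈ stdSimplex ℝ (Fin C), ∀ i, 0 ≤ l β i ∧ l β i ≤ L)
    (w : Fin K → ℝ)
    -- class-conditional densities induced by each feature map g ∈ G
    (p : G → Fin K → Fin C → Z → ℝ)
    (hp_prob : ∀ g i c, ∫ z, p g i c z ∂ν = 1)
    -- fixed class weights
    (γ : Fin K → Fin C → ℝ)
    (α : Fin C → ℝ) (hα_pos : ∀ c, 0 < α c)
    -- class-c conditional mixture densities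
    (q : G → Fin C → Z → ℝ)
    (hq : ∀ g c z, q g c z = ∑ i, (w i * γ i c / α c) * p g i c z)
    -- the source loss S and the divergence D
    (S D : G → ℝ)
    (hS : ∀ g, S g
      = ⨅ hh : {h : Z → Fin C → ℝ // Measurable h ∧ ∀ z, h z ∈ stdSimplex ℝ (Fin C)},
          ∑ i, w i * ∑ c, γ i c * ∫ z, l (hh.1 z) c * p g i c z ∂ν)
    (hD : ∀ g, D g
      = -(⨅ hh : {h : Z → Fin C → ℝ // Measurable h ∧ ∀ z, h z ∈ stdSimplex ℝ (Fin C)},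
            ∑ c, α c * ∫ z, l (hh.1 z) c * q g c z ∂ν)
          + ⨅ β : stdSimplex ℝ (Fin C), ∑ c, l β.1 c * α c) :
    (∀ g₁ g₂ : G, S g₁ ≤ S g₂ ↔ D g₂ ≤ D g₁)
    ∧ (∀ gs : G, (∀ g, S gs ≤ S g) ↔ (∀ g, D g ≤ D gs)) := by
  have hD_eq : ∀ g, D g = -S g + ⨅ β : stdSimplex ℝ (Fin C), ∑ c, l β.1 c * α c := by
    intro g
    rw [hD, hS]
    congr 2
    refine iInf_congr fun hh => ?_
    simp only [hq]
    exact mixture_risk_eq_source_risk hl_meas hl_bounds hh.2.1 hh.2.2 w γ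
      (fun c => (hα_pos c).ne') (hp_prob g)
  have hS_le_iff : ∀ g₁ g₂ : G, S g₁ ≤ S g₂ ↔ D g₂ ≤ D g₁ := fun g₁ g₂ => by
    rw [hD_eq, hD_eq, add_le_add_iff_right, neg_le_neg_iff]
  exact ⟨hS_le_iff, fun gs => forall_congr' fun g => hS_le_iff gs g⟩

/-- **Theorem 6, part 2.** Minimizing the source loss `S` over a family of feature
maps is equivalent to maximizing the hypothesis-aware divergence `D` of the induced
class-conditional mixtures: `S g₁ ≤ S g₂ ↔ D g₂ ≤ D g₁`, and in particular `g*`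
minimizes `S` iff `g*` maximizes `D`. -/
theorem general_DI_equiv_max_divergence
    {Z G : Type*} [MeasurableSpace Z] (ν : Measure Z) [SigmaFinite ν]
    (K C : ℕ) (hK : 0 < K) (hC : 0 < C)
    (L : ℝ) (hL : 0 ≤ L)
    (l : (Fin C → ℝ) → Fin C → ℝ)
    (hl_meas : ∀ i, Measurable fun β => l β i)
    (hl_bounds : ∀ β ∈ stdSimplex ℝ (Fin C), ∀ i, 0 ≤ l β i ∧ l β i ≤ L)
    (w : Fin K → ℝ) (hw_nonneg : ∀ i, 0 ≤ w i) (hw_sum : ∑ i, w i = 1)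
    -- class-conditional densities induced by each feature map g ∈ G
    (p : G → Fin K → Fin C → Z → ℝ)
    (hp_meas : ∀ g i c, Measurable (p g i c)) (hp_nonneg : ∀ g i c z, 0 ≤ p g i c z)
    (hp_prob : ∀ g i c, ∫ z, p g i c z ∂ν = 1)
    -- fixed class weights
    (γ : Fin K → Fin C → ℝ) (hγ_nonneg : ∀ i c, 0 ≤ γ i c)
    (hγ_sum : ∀ i, ∑ c, γ i c = 1)
    (α : Fin C → ℝ) (hα : ∀ c, α c = ∑ j, w j * γ j c) (hα_pos : ∀ c, 0 < α c)
    -- class-c conditional mixture densities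
    (q : G → Fin C → Z → ℝ)
    (hq : ∀ g c z, q g c z = ∑ i, (w i * γ i c / α c) * p g i c z)
    -- the source loss S and the divergence D
    (S D : G → ℝ)
    (hS : ∀ g, S g
      = ⨅ hh : {h : Z → Fin C → ℝ // Measurable h ∧ ∀ z, h z ∈ stdSimplex ℝ (Fin C)},
          ∑ i, w i * ∑ c, γ i c * ∫ z, l (hh.1 z) c * p g i c z ∂ν)
    (hD : ∀ g, D g
      = -(⨅ hh : {h : Z → Fin C → ℝ // Measurable h ∧ ∀ z, h z ∈ stdSimplex ℝ (Fin C)},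
            ∑ c, α c * ∫ z, l (hh.1 z) c * q g c z ∂ν)
          + ⨅ β : stdSimplex ℝ (Fin C), ∑ c, l β.1 c * α c) :
    (∀ g₁ g₂ : G, S g₁ ≤ S g₂ ↔ D g₂ ≤ D g₁)
    ∧ (∀ gs : G, (∀ g, S gs ≤ S g) ↔ (∀ g, D g ≤ D gs)) :=
  general_DI_equiv_max_divergence_general ν K C L l hl_meas hl_bounds w p hp_prob γ α hα_pos q hq S
    D hS hD
end

section
/- Let (X, μ) and (Z, ν) be measure spaces with σ-finite measures, π a probability vector, P^{S,1},…,P^{S,K}, P^T probability measures on X with densities w.r.t. μ and labeling functions f^{S,1},…,f^{S,K}, f^T : X → Y_Δ, g : X → Z measurable such that each g_#P^{S,k} and g_#P^T has a density w.r.t. ν, and ĥ : Z → Y_Δ measurable. Let a ∈ Y_Δ be the source-mixture label marginal with a_y = Σ_{k=1}^K π_k ∫ f^{S,k}(x,y) p^{S,k}(x) dμ(x), and b ∈ Y_Δ the target label marginal with b_y = ∫ f^T(x,y) p^T(x) dμ(x). Then, with losses taken to be the Hellinger loss, d_{1/2}(a, b) ≤ [ Σ_{k=1}^K π_k L(ĥ∘g,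 f^{S,k}, P^{S,k}) ]^{1/2} + d_{1/2}( g_#P^T, Σ_{k=1}^K π_k g_#P^{S,k} ) + L(ĥ∘g, f^T, P^T)^{1/2}. -/
/-!
`√(hellingerLoss u v)` is `√2` times the Euclidean distance between `√u` and `√v`, so the
triangle inequality through the label marginals `c`, `d` that `ĥ` predicts on the pushed-forward
source mixture and target splits the claim into three bounds. Each follows from the joint
convexity of the squared Hellinger distance, `(√∫u - √∫v)² ≤ ∫ (√u - √v)²` (Cauchy–Schwarz for
the cross term `∫ √u √v`), and its finite analogue for the mixture weights: with `u = f p`,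
`v = ĥ p` it bounds the distance of label marginals by the expected loss, and with `u = ĥ p`,
`v = ĥ q` the sum over labels collapses because `ĥ` takes values in the simplex. Change of
variables along `g` identifies the marginals of `ĥ ∘ g` on `X` with those of `ĥ` on `Z`.
-/

open MeasureTheory

theorem sq_sqrt_sub_sqrt_le {A B I : ℝ} (hA : 0 ≤ A) (hB : 0 ≤ B) (hI : I ≤ √A * √B) :
    (√A - √B) ^ 2 ≤ A + B - 2 * I := by
  nlinarith [Real.sq_sqrt hA, Real.sq_sqrt hB]

theorem sq_sqrt_mul_sub_sqrt_mul (a b : ℝ) {t : ℝ} (ht : 0 ≤ t) :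
    (√(a * t) - √(b * t)) ^ 2 = (√a - √b) ^ 2 * t := by
  rw [Real.sqrt_mul' a ht, Real.sqrt_mul' b ht, ← sub_mul, mul_pow, Real.sq_sqrt ht]

theorem sq_sqrt_sum_sub_sqrt_sum_le {κ : Type*} [Fintype κ] {w A B : κ → ℝ}
    (hw : ∀ k, 0 ≤ w k) (hA : ∀ k, 0 ≤ A k) (hB : ∀ k, 0 ≤ B k) :
    (√(∑ k, w k * A k) - √(∑ k, w k * B k)) ^ 2 ≤ ∑ k, w k * (√(A k) - √(B k)) ^ 2 := by
  have hcross : ∑ k, w k * (√(A k) * √(B k)) ≤ √(∑ k, w k * A k) * √(∑ k, w k * B k) := by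
    refine le_trans (le_of_eq (Finset.sum_congr rfl fun k _ => ?_))
      (Real.sum_sqrt_mul_sqrt_le _ (fun k => mul_nonneg (hw k) (hA k))
        fun k => mul_nonneg (hw k) (hB k))
    rw [Real.sqrt_mul (hw k), Real.sqrt_mul (hw k)]
    linear_combination (√(A k) * √(B k)) * (Real.mul_self_sqrt (hw k)).symm
  have hexpand : ∑ k, w k * (√(A k) - √(B k)) ^ 2
      = ∑ k, w k * A k + ∑ k, w k * B k - 2 * ∑ k, w k * (√(A k) * √(B k)) := by
    rw [Finset.mul_sum, ← Finset.sum_add_distrib, ← Finset.sum_sub_distrib]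
    refine Finset.sum_congr rfl fun k _ => ?_
    rw [sub_sq, Real.sq_sqrt (hA k), Real.sq_sqrt (hB k)]
    ring
  rw [hexpand]
  exact sq_sqrt_sub_sqrt_le (Finset.sum_nonneg fun k _ => mul_nonneg (hw k) (hA k))
    (Finset.sum_nonneg fun k _ => mul_nonneg (hw k) (hB k)) hcross

section Integral

variable {α : Type*} [MeasurableSpace α] {μ : Measure α} {u v : α → ℝ}

theorem integrable_sqrt_mul_sqrt (hu : Integrable u μ) (hv : Integrable v μ)
    (hu0 : 0 ≤ᵐ[μ] u) (hv0 : 0 ≤ᵐ[μ] v) : Integrable (fun x => √(u x) * √(v x)) μ := by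
  refine (hu.add hv).mono' ((Real.continuous_sqrt.comp_aestronglyMeasurable hu.1).mul
    (Real.continuous_sqrt.comp_aestronglyMeasurable hv.1)) ?_
  filter_upwards [hu0, hv0] with x hux hvx
  rw [Real.norm_of_nonneg (by positivity), Pi.add_apply]
  nlinarith [sq_nonneg (√(u x) - √(v x)), Real.sq_sqrt hux, Real.sq_sqrt hvx]

theorem integral_sqrt_mul_sqrt_le (hu : Integrable u μ) (hv : Integrable v μ)
    (hu0 : 0 ≤ᵐ[μ] u) (hv0 : 0 ≤ᵐ[μ] v) :
    ∫ x, √(u x) * √(v x) ∂μ ≤ √(∫ x, u x ∂μ) * √(∫ x, v x ∂μ) := by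
  have hL2 : ∀ {f : α → ℝ}, Integrable f μ → 0 ≤ᵐ[μ] f →
      MemLp (fun x => √(f x)) (ENNReal.ofReal 2) μ := fun hf hf0 => by
    rw [ENNReal.ofReal_ofNat,
      memLp_two_iff_integrable_sq (Real.continuous_sqrt.comp_aestronglyMeasurable hf.1)]
    refine hf.congr ?_
    filter_upwards [hf0] with x hx using (Real.sq_sqrt hx).symm
  have hsq : ∀ {f : α → ℝ}, 0 ≤ᵐ[μ] f → ∫ x, √(f x) ^ (2 : ℝ) ∂μ = ∫ x, f x ∂μ := by
    intro f hf0
    refine integral_congr_ae ?_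
    filter_upwards [hf0] with x hx
    rw [Real.rpow_two, Real.sq_sqrt hx]
  have := integral_mul_le_Lp_mul_Lq_of_nonneg Real.HolderConjugate.two_two
    (.of_forall fun x => Real.sqrt_nonneg (u x)) (.of_forall fun x => Real.sqrt_nonneg (v x))
    (hL2 hu hu0) (hL2 hv hv0)
  rwa [hsq hu0, hsq hv0, ← Real.sqrt_eq_rpow, ← Real.sqrt_eq_rpow] at this

theorem sq_sqrt_sub_sqrt_ae_eq (hu0 : 0 ≤ᵐ[μ] u) (hv0 : 0 ≤ᵐ[μ] v) :
    (fun x => (√(u x) - √(v x)) ^ 2) =ᵐ[μ] fun x => u x + v x - 2 * (√(u x) * √(v x)) := by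
  filter_upwards [hu0, hv0] with x hux hvx
  rw [sub_sq, Real.sq_sqrt hux, Real.sq_sqrt hvx]
  ring

theorem integrable_sq_sqrt_sub_sqrt (hu : Integrable u μ) (hv : Integrable v μ)
    (hu0 : 0 ≤ᵐ[μ] u) (hv0 : 0 ≤ᵐ[μ] v) : Integrable (fun x => (√(u x) - √(v x)) ^ 2) μ :=
  ((hu.add hv).sub ((integrable_sqrt_mul_sqrt hu hv hu0 hv0).const_mul 2)).congr
    (sq_sqrt_sub_sqrt_ae_eq hu0 hv0).symm

theorem sq_sqrt_integral_sub_sqrt_integral_le (hu : Integrable u μ) (hv : Integrable v μ)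
    (hu0 : 0 ≤ᵐ[μ] u) (hv0 : 0 ≤ᵐ[μ] v) :
    (√(∫ x, u x ∂μ) - √(∫ x, v x ∂μ)) ^ 2 ≤ ∫ x, (√(u x) - √(v x)) ^ 2 ∂μ := by
  rw [integral_congr_ae (sq_sqrt_sub_sqrt_ae_eq hu0 hv0),
    integral_sub (f := fun x => u x + v x) (hu.add hv)
      ((integrable_sqrt_mul_sqrt hu hv hu0 hv0).const_mul 2),
    integral_add hu hv, integral_const_mul]
  exact sq_sqrt_sub_sqrt_le (integral_nonneg_of_ae hu0) (integral_nonneg_of_ae hv0)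
    (integral_sqrt_mul_sqrt_le hu hv hu0 hv0)

end Integral

section HellingerLoss

variable {ι : Type*} [Fintype ι]

noncomputable def hellingerLoss (u v : ι → ℝ) : ℝ := 2 * ∑ i, (√(u i) - √(v i)) ^ 2

theorem hellingerLoss_comm (u v : ι → ℝ) : hellingerLoss u v = hellingerLoss v u := by
  simp only [hellingerLoss, sub_sq_comm (√(u _))]

theorem sqrt_hellingerLoss_eq_dist (u v : ι → ℝ) :
    √(hellingerLoss u v) =
      √2 * dist (WithLp.toLp 2 fun i => √(u i) : EuclideanSpace ℝ ι)
        (WithLp.toLp 2 fun i => √(v i)) := by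
  simp only [hellingerLoss, EuclideanSpace.dist_eq, Real.dist_eq, sq_abs]
  exact Real.sqrt_mul zero_le_two _

theorem sqrt_hellingerLoss_le_add (u v w : ι → ℝ) :
    √(hellingerLoss u w) ≤ √(hellingerLoss u v) + √(hellingerLoss v w) := by
  simp only [sqrt_hellingerLoss_eq_dist, ← mul_add]
  exact mul_le_mul_of_nonneg_left (dist_triangle _ _ _) (Real.sqrt_nonneg 2)

theorem hellingerLoss_mul_right (u v : ι → ℝ) {t : ℝ} (ht : 0 ≤ t) :
    hellingerLoss (fun i => u i * t) (fun i => v i * t) = hellingerLoss u v * t := by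
  simp only [hellingerLoss, sq_sqrt_mul_sub_sqrt_mul _ _ ht, ← Finset.sum_mul, mul_assoc]

theorem hellingerLoss_sum_smul_le {κ : Type*} [Fintype κ] {w : κ → ℝ} {u v : κ → ι → ℝ}
    (hw : ∀ k, 0 ≤ w k) (hu : ∀ k i, 0 ≤ u k i) (hv : ∀ k i, 0 ≤ v k i) :
    hellingerLoss (∑ k, w k • u k) (∑ k, w k • v k) ≤ ∑ k, w k * hellingerLoss (u k) (v k) := by
  simp only [hellingerLoss, Finset.sum_apply, Pi.smul_apply, smul_eq_mul, Finset.mul_sum]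
  rw [Finset.sum_comm]
  gcongr with i
  simp_rw [mul_left_comm (w _) 2, ← Finset.mul_sum]
  exact mul_le_mul_of_nonneg_left (sq_sqrt_sum_sub_sqrt_sum_le hw (hu · i) (hv · i)) zero_le_two

variable {α : Type*} [MeasurableSpace α] {μ : Measure α}

theorem hellingerLoss_integral_le {u v : α → ι → ℝ}
    (hu : ∀ i, Integrable (fun x => u x i) μ) (hv : ∀ i, Integrable (fun x => v x i) μ)
    (hu0 : ∀ i, 0 ≤ᵐ[μ] fun x => u x i) (hv0 : ∀ i, 0 ≤ᵐ[μ] fun x => v x i) :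
    hellingerLoss (fun i => ∫ x, u x i ∂μ) (fun i => ∫ x, v x i ∂μ)
      ≤ ∫ x, hellingerLoss (u x) (v x) ∂μ := by
  simp only [hellingerLoss]
  rw [integral_const_mul, integral_finsetSum _ fun i _ =>
    integrable_sq_sqrt_sub_sqrt (hu i) (hv i) (hu0 i) (hv0 i)]
  gcongr with i
  exact sq_sqrt_integral_sub_sqrt_integral_le (hu i) (hv i) (hu0 i) (hv0 i)

end HellingerLoss

section LabelMarginal

variable {α ι : Type*} [MeasurableSpace α] [Fintype ι] {μ : Measure α}

noncomputable def labelMarginal (μ : Measure α) (f : α → ι → ℝ) (p : α → ℝ) : ι → ℝ :=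
  fun i => ∫ x, f x i * p x ∂μ

variable {f h : α → ι → ℝ} {p q : α → ℝ}

theorem integrable_mul_of_mem_stdSimplex (hf : Measurable f) (hf1 : ∀ x, f x ∈ stdSimplex ℝ ι)
    (hp : Integrable p μ) (i : ι) : Integrable (fun x => f x i * p x) μ := by
  refine hp.bdd_mul (c := 1) (hf.eval (a := i)).aestronglyMeasurable (.of_forall fun x => ?_)
  rw [Real.norm_of_nonneg ((hf1 x).1 i)]
  exact (mem_Icc_of_mem_stdSimplex (hf1 x) i).2

theorem ae_nonneg_mul_of_mem_stdSimplex (hf1 : ∀ x, f x ∈ stdSimplex ℝ ι) (hp0 : 0 ≤ᵐ[μ] p)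
    (i : ι) : 0 ≤ᵐ[μ] fun x => f x i * p x := by
  filter_upwards [hp0] with x hx using mul_nonneg ((hf1 x).1 i) hx

theorem labelMarginal_nonneg (hf1 : ∀ x, f x ∈ stdSimplex ℝ ι) (hp0 : 0 ≤ᵐ[μ] p) (i : ι) :
    0 ≤ labelMarginal μ f p i :=
  integral_nonneg_of_ae (ae_nonneg_mul_of_mem_stdSimplex hf1 hp0 i)

theorem labelMarginal_sum_mul {κ : Type*} [Fintype κ] (hf : Measurable f)
    (hf1 : ∀ x, f x ∈ stdSimplex ℝ ι) (w : κ → ℝ) {p : κ → α → ℝ}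
    (hp : ∀ k, Integrable (p k) μ) :
    labelMarginal μ f (fun x => ∑ k, w k * p k x) = ∑ k, w k • labelMarginal μ f (p k) := by
  funext i
  simp only [labelMarginal, Finset.sum_apply, Pi.smul_apply, smul_eq_mul, Finset.mul_sum]
  rw [integral_finsetSum _ fun k _ =>
    integrable_mul_of_mem_stdSimplex hf hf1 ((hp k).const_mul (w k)) i]
  refine Finset.sum_congr rfl fun k _ => ?_
  rw [← integral_const_mul]
  exact integral_congr_ae (.of_forall fun x => by ring)

theorem hellingerLoss_labelMarginal_le (hf : Measurable f) (hf1 : ∀ x, f x ∈ stdSimplex ℝ ι)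
    (hh : Measurable h) (hh1 : ∀ x, h x ∈ stdSimplex ℝ ι)
    (hp : Integrable p μ) (hp0 : 0 ≤ᵐ[μ] p) :
    hellingerLoss (labelMarginal μ f p) (labelMarginal μ h p)
      ≤ ∫ x, hellingerLoss (f x) (h x) * p x ∂μ := by
  refine (hellingerLoss_integral_le (integrable_mul_of_mem_stdSimplex hf hf1 hp)
    (integrable_mul_of_mem_stdSimplex hh hh1 hp) (ae_nonneg_mul_of_mem_stdSimplex hf1 hp0)
    (ae_nonneg_mul_of_mem_stdSimplex hh1 hp0)).trans_eq (integral_congr_ae ?_)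
  filter_upwards [hp0] with x hx using hellingerLoss_mul_right _ _ hx

theorem hellingerLoss_sum_smul_labelMarginal_le {κ : Type*} [Fintype κ] {w : κ → ℝ}
    {f : κ → α → ι → ℝ} {p : κ → α → ℝ} (hw : ∀ k, 0 ≤ w k)
    (hh : Measurable h) (hh1 : ∀ x, h x ∈ stdSimplex ℝ ι)
    (hf : ∀ k, Measurable (f k)) (hf1 : ∀ k x, f k x ∈ stdSimplex ℝ ι)
    (hp : ∀ k, Integrable (p k) μ) (hp0 : ∀ k, 0 ≤ᵐ[μ] p k) :
    hellingerLoss (∑ k, w k • labelMarginal μ h (p k)) (∑ k, w k • labelMarginal μ (f k) (p k))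
      ≤ ∑ k, w k * ∫ x, hellingerLoss (h x) (f k x) * p k x ∂μ :=
  (hellingerLoss_sum_smul_le hw (fun k => labelMarginal_nonneg hh1 (hp0 k))
    (fun k => labelMarginal_nonneg (hf1 k) (hp0 k))).trans <|
    Finset.sum_le_sum fun k _ => mul_le_mul_of_nonneg_left
      (hellingerLoss_labelMarginal_le hh hh1 (hf k) (hf1 k) (hp k) (hp0 k)) (hw k)

/-- Since `h x` is a probability vector,
`∑ i, h x i * (√(p x) - √(q x)) ^ 2 = (√(p x) - √(q x)) ^ 2`. -/
theorem hellingerLoss_labelMarginal_le_of_density (hh : Measurable h)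
    (hh1 : ∀ x, h x ∈ stdSimplex ℝ ι) (hp : Integrable p μ) (hq : Integrable q μ)
    (hp0 : 0 ≤ᵐ[μ] p) (hq0 : 0 ≤ᵐ[μ] q) :
    hellingerLoss (labelMarginal μ h p) (labelMarginal μ h q)
      ≤ 2 * ∫ x, (√(p x) - √(q x)) ^ 2 ∂μ := by
  refine (hellingerLoss_integral_le (integrable_mul_of_mem_stdSimplex hh hh1 hp)
    (integrable_mul_of_mem_stdSimplex hh hh1 hq) (ae_nonneg_mul_of_mem_stdSimplex hh1 hp0)
    (ae_nonneg_mul_of_mem_stdSimplex hh1 hq0)).trans_eq ?_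
  rw [← integral_const_mul]
  refine integral_congr_ae (.of_forall fun x => ?_)
  simp only [hellingerLoss, mul_comm (h x _), sq_sqrt_mul_sub_sqrt_mul _ _ ((hh1 x).1 _),
    ← Finset.mul_sum, (hh1 x).2, mul_one]

end LabelMarginal

section Pushforward

variable {α β ι : Type*} [MeasurableSpace α] [MeasurableSpace β]
  {μ : Measure α} {ν : Measure β} {g : α → β}

theorem integral_withDensity_ofReal {p : α → ℝ} (hp : AEMeasurable p μ) (hp0 : 0 ≤ᵐ[μ] p)
    (r : α → ℝ) :
    ∫ x, r x ∂μ.withDensity (fun x => ENNReal.ofReal (p x)) = ∫ x, r x * p x ∂μ := by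
  rw [integral_withDensity_eq_integral_toReal_smul₀ hp.ennreal_ofReal
    (.of_forall fun _ => ENNReal.ofReal_lt_top)]
  refine integral_congr_ae ?_
  filter_upwards [hp0] with x hx
  rw [ENNReal.toReal_ofReal hx, smul_eq_mul, mul_comm]

variable {p : α → ℝ} {q : β → ℝ}

theorem integrable_of_map_withDensity_eq (hg : Measurable g) (hp : Integrable p μ)
    (hq : AEMeasurable q ν) (hq0 : 0 ≤ᵐ[ν] q)
    (hmap : (μ.withDensity fun x => ENNReal.ofReal (p x)).map g
      = ν.withDensity fun z => ENNReal.ofReal (q z)) :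
    Integrable q ν := by
  have hmass : ∫⁻ z, ENNReal.ofReal (q z) ∂ν = ∫⁻ x, ENNReal.ofReal (p x) ∂μ := by
    simpa [Measure.map_apply hg MeasurableSet.univ, withDensity_apply _ MeasurableSet.univ]
      using (congrArg (· Set.univ) hmap).symm
  exact ⟨hq.aestronglyMeasurable, (hasFiniteIntegral_iff_ofReal hq0).2
    (hmass ▸ hp.lintegral_lt_top)⟩

theorem integral_comp_mul_eq_of_map_withDensity (hg : Measurable g) (hp : AEMeasurable p μ)
    (hp0 : 0 ≤ᵐ[μ] p)
    (hq : AEMeasurable q ν) (hq0 : 0 ≤ᵐ[ν] q)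
    (hmap : (μ.withDensity fun x => ENNReal.ofReal (p x)).map g
      = ν.withDensity fun z => ENNReal.ofReal (q z))
    {r : β → ℝ} (hr : Measurable r) :
    ∫ x, r (g x) * p x ∂μ = ∫ z, r z * q z ∂ν := by
  rw [← integral_withDensity_ofReal hp hp0, ← integral_withDensity_ofReal hq hq0, ← hmap,
    integral_map hg.aemeasurable hr.aestronglyMeasurable]

theorem labelMarginal_comp_eq_of_map_withDensity (hg : Measurable g) (hp : AEMeasurable p μ)
    (hp0 : 0 ≤ᵐ[μ] p)
    (hq : AEMeasurable q ν) (hq0 : 0 ≤ᵐ[ν] q)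
    (hmap : (μ.withDensity fun x => ENNReal.ofReal (p x)).map g
      = ν.withDensity fun z => ENNReal.ofReal (q z))
    {h : β → ι → ℝ} (hh : Measurable h) :
    labelMarginal μ (fun x => h (g x)) p = labelMarginal ν h q :=
  funext fun _ => integral_comp_mul_eq_of_map_withDensity hg hp hp0 hq hq0 hmap hh.eval

theorem hellingerLoss_labelMarginal_le_of_map_withDensity [Fintype ι] (hg : Measurable g)
    (hp : Integrable p μ) (hp0 : 0 ≤ᵐ[μ] p) (hq : AEMeasurable q ν) (hq0 : 0 ≤ᵐ[ν] q)
    (hmap : (μ.withDensity fun x => ENNReal.ofReal (p x)).map g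
      = ν.withDensity fun z => ENNReal.ofReal (q z))
    {h : β → ι → ℝ} {f : α → ι → ℝ} (hh : Measurable h) (hh1 : ∀ z, h z ∈ stdSimplex ℝ ι)
    (hf : Measurable f) (hf1 : ∀ x, f x ∈ stdSimplex ℝ ι) :
    hellingerLoss (labelMarginal ν h q) (labelMarginal μ f p)
      ≤ ∫ x, hellingerLoss (h (g x)) (f x) * p x ∂μ := by
  rw [← labelMarginal_comp_eq_of_map_withDensity hg hp.aemeasurable hp0 hq hq0 hmap hh]
  exact hellingerLoss_labelMarginal_le (hh.comp hg) (fun x => hh1 (g x)) hf hf1 hp hp0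

theorem hellingerLoss_labelMarginal_sum_le_of_map_withDensity [Fintype ι] {κ : Type*} [Fintype κ]
    {w : κ → ℝ} (hw : ∀ k, 0 ≤ w k) {p : κ → α → ℝ} {q : κ → β → ℝ} (hg : Measurable g)
    (hp : ∀ k, Integrable (p k) μ) (hp0 : ∀ k, 0 ≤ᵐ[μ] p k)
    (hq : ∀ k, AEMeasurable (q k) ν) (hq0 : ∀ k, 0 ≤ᵐ[ν] q k)
    (hmap : ∀ k, (μ.withDensity fun x => ENNReal.ofReal (p k x)).map g
      = ν.withDensity fun z => ENNReal.ofReal (q k z))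
    {h : β → ι → ℝ} {f : κ → α → ι → ℝ} (hh : Measurable h) (hh1 : ∀ z, h z ∈ stdSimplex ℝ ι)
    (hf : ∀ k, Measurable (f k)) (hf1 : ∀ k x, f k x ∈ stdSimplex ℝ ι) :
    hellingerLoss (labelMarginal ν h fun z => ∑ k, w k * q k z)
        (∑ k, w k • labelMarginal μ (f k) (p k))
      ≤ ∑ k, w k * ∫ x, hellingerLoss (h (g x)) (f k x) * p k x ∂μ := by
  rw [labelMarginal_sum_mul hh hh1 w fun k =>
    integrable_of_map_withDensity_eq hg (hp k) (hq k) (hq0 k) (hmap k)]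
  simp_rw [← labelMarginal_comp_eq_of_map_withDensity hg (hp _).aemeasurable (hp0 _) (hq _)
    (hq0 _) (hmap _) hh]
  exact hellingerLoss_sum_smul_labelMarginal_le hw (hh.comp hg) (fun x => hh1 (g x)) hf hf1 hp hp0

end Pushforward

theorem tradeoff_lower_bound_general_general
    {X Z : Type*} [MeasurableSpace X] [MeasurableSpace Z]
    (μ : Measure X) (ν : Measure Z)
    (K C : ℕ)
    (w : Fin K → ℝ) (hw_nonneg : ∀ k, 0 ≤ w k)
    -- source and target densities w.r.t. μ
    (pS : Fin K → X → ℝ) (pT : X → ℝ)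
    (hpS_nonneg : ∀ k x, 0 ≤ pS k x)
    (hpS_prob : ∀ k, ∫ x, pS k x ∂μ = 1)
    (hpT_nonneg : ∀ x, 0 ≤ pT x)
    (hpT_prob : ∫ x, pT x ∂μ = 1)
    -- labeling functions
    (fS : Fin K → X → Fin C → ℝ) (fT : X → Fin C → ℝ)
    (hfS_meas : ∀ k, Measurable (fS k))
    (hfS_simplex : ∀ k x, fS k x ∈ stdSimplex ℝ (Fin C))
    (hfT_meas : Measurable fT) (hfT_simplex : ∀ x, fT x ∈ stdSimplex ℝ (Fin C))
    -- feature map and hypothesis on the latent space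
    (g : X → Z) (hg : Measurable g)
    (hhat : Z → Fin C → ℝ) (hhat_meas : Measurable hhat)
    (hhat_simplex : ∀ z, hhat z ∈ stdSimplex ℝ (Fin C))
    -- densities of the pushforward distributions w.r.t. ν
    (pgS : Fin K → Z → ℝ) (pgT : Z → ℝ)
    (hpgS_meas : ∀ k, Measurable (pgS k)) (hpgS_nonneg : ∀ k z, 0 ≤ pgS k z)
    (hpgT_meas : Measurable pgT) (hpgT_nonneg : ∀ z, 0 ≤ pgT z)
    (hmapS : ∀ k, Measure.map g (μ.withDensity fun x => ENNReal.ofReal (pS k x))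
      = ν.withDensity fun z => ENNReal.ofReal (pgS k z))
    (hmapT : Measure.map g (μ.withDensity fun x => ENNReal.ofReal (pT x))
      = ν.withDensity fun z => ENNReal.ofReal (pgT z))
    -- label marginals of the source mixture and the target domain
    (a b : Fin C → ℝ)
    (ha : ∀ y, a y = ∑ k, w k * ∫ x, fS k x y * pS k x ∂μ)
    (hb : ∀ y, b y = ∫ x, fT x y * pT x ∂μ) :
    Real.sqrt (2 * ∑ y, (Real.sqrt (a y) - Real.sqrt (b y)) ^ 2)
      ≤ Real.sqrt (∑ k, w k *
            ∫ x, (2 * ∑ i, (Real.sqrt (hhat (g x) i) - Real.sqrt (fS k x i)) ^ 2)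
              * pS k x ∂μ)
        + Real.sqrt (2 * ∫ z,
            (Real.sqrt (pgT z) - Real.sqrt (∑ k, w k * pgS k z)) ^ 2 ∂ν)
        + Real.sqrt (∫ x,
            (2 * ∑ i, (Real.sqrt (hhat (g x) i) - Real.sqrt (fT x i)) ^ 2)
              * pT x ∂μ) := by
  have hpS_int k : Integrable (pS k) μ := .of_integral_ne_zero (by simp [hpS_prob k])
  have hpT_int : Integrable pT μ := .of_integral_ne_zero (by simp [hpT_prob])
  have hpgS_int k : Integrable (pgS k) ν := integrable_of_map_withDensity_eq hg (hpS_int k)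
    (hpgS_meas k).aemeasurable (.of_forall (hpgS_nonneg k)) (hmapS k)
  have hpgT_int : Integrable pgT ν := integrable_of_map_withDensity_eq hg hpT_int
    hpgT_meas.aemeasurable (.of_forall hpgT_nonneg) hmapT
  set q : Z → ℝ := fun z => ∑ k, w k * pgS k z
  set c := labelMarginal ν hhat q
  set d := labelMarginal ν hhat pgT
  have source : hellingerLoss a c
      ≤ ∑ k, w k * ∫ x, hellingerLoss (hhat (g x)) (fS k x) * pS k x ∂μ := by
    rw [hellingerLoss_comm, show a = ∑ k, w k • labelMarginal μ (fS k) (pS k) from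
      funext fun y => by simp [ha, labelMarginal, Finset.sum_apply]]
    exact hellingerLoss_labelMarginal_sum_le_of_map_withDensity hw_nonneg hg hpS_int
      (fun k => .of_forall (hpS_nonneg k)) (fun k => (hpgS_meas k).aemeasurable)
      (fun k => .of_forall (hpgS_nonneg k)) hmapS hhat_meas hhat_simplex hfS_meas hfS_simplex
  have middle : hellingerLoss c d ≤ 2 * ∫ z, (√(pgT z) - √(q z)) ^ 2 ∂ν := by
    rw [hellingerLoss_comm]
    exact hellingerLoss_labelMarginal_le_of_density hhat_meas hhat_simplex hpgT_int
      (integrable_finsetSum _ fun k _ => (hpgS_int k).const_mul (w k)) (.of_forall hpgT_nonneg)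
      (.of_forall fun z => Finset.sum_nonneg fun k _ => mul_nonneg (hw_nonneg k) (hpgS_nonneg k z))
  have target : hellingerLoss d b ≤ ∫ x, hellingerLoss (hhat (g x)) (fT x) * pT x ∂μ := by
    rw [show b = labelMarginal μ fT pT from funext hb]
    exact hellingerLoss_labelMarginal_le_of_map_withDensity hg hpT_int (.of_forall hpT_nonneg)
      hpgT_meas.aemeasurable (.of_forall hpgT_nonneg) hmapT hhat_meas hhat_simplex
      hfT_meas hfT_simplex
  calc √(hellingerLoss a b)
      ≤ √(hellingerLoss a c) + √(hellingerLoss c d) + √(hellingerLoss d b) := by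
        linarith [sqrt_hellingerLoss_le_add a c b, sqrt_hellingerLoss_le_add c d b]
    _ ≤ _ := add_le_add (add_le_add (Real.sqrt_le_sqrt source) (Real.sqrt_le_sqrt middle))
        (Real.sqrt_le_sqrt target)

/-- **Theorem 8, part 1 (trade-off bound).** The Hellinger distance between the
source-mixture label marginal and the target label marginal is bounded by the square
root of the mixture source Hellinger loss, plus the Hellinger distance between the
pushed-forward target distribution and the pushed-forward source mixture, plus the
square root of the target Hellinger loss. -/
theorem tradeoff_lower_bound_general
    {X Z : Type*} [MeasurableSpace X] [MeasurableSpace Z]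
    (μ : Measure X) (ν : Measure Z) [SigmaFinite μ] [SigmaFinite ν]
    (K C : ℕ) (hK : 0 < K) (hC : 0 < C)
    (w : Fin K → ℝ) (hw_nonneg : ∀ k, 0 ≤ w k) (hw_sum : ∑ k, w k = 1)
    -- source and target densities w.r.t. μ
    (pS : Fin K → X → ℝ) (pT : X → ℝ)
    (hpS_meas : ∀ k, Measurable (pS k)) (hpS_nonneg : ∀ k x, 0 ≤ pS k x)
    (hpS_prob : ∀ k, ∫ x, pS k x ∂μ = 1)
    (hpT_meas : Measurable pT) (hpT_nonneg : ∀ x, 0 ≤ pT x)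
    (hpT_prob : ∫ x, pT x ∂μ = 1)
    -- labeling functions
    (fS : Fin K → X → Fin C → ℝ) (fT : X → Fin C → ℝ)
    (hfS_meas : ∀ k, Measurable (fS k))
    (hfS_simplex : ∀ k x, fS k x ∈ stdSimplex ℝ (Fin C))
    (hfT_meas : Measurable fT) (hfT_simplex : ∀ x, fT x ∈ stdSimplex ℝ (Fin C))
    -- feature map and hypothesis on the latent space
    (g : X → Z) (hg : Measurable g)
    (hhat : Z → Fin C → ℝ) (hhat_meas : Measurable hhat)
    (hhat_simplex : ∀ z, hhat z ∈ stdSimplex ℝ (Fin C))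
    -- densities of the pushforward distributions w.r.t. ν
    (pgS : Fin K → Z → ℝ) (pgT : Z → ℝ)
    (hpgS_meas : ∀ k, Measurable (pgS k)) (hpgS_nonneg : ∀ k z, 0 ≤ pgS k z)
    (hpgT_meas : Measurable pgT) (hpgT_nonneg : ∀ z, 0 ≤ pgT z)
    (hmapS : ∀ k, Measure.map g (μ.withDensity fun x => ENNReal.ofReal (pS k x))
      = ν.withDensity fun z => ENNReal.ofReal (pgS k z))
    (hmapT : Measure.map g (μ.withDensity fun x => ENNReal.ofReal (pT x))
      = ν.withDensity fun z => ENNReal.ofReal (pgT z))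
    -- label marginals of the source mixture and the target domain
    (a b : Fin C → ℝ)
    (ha : ∀ y, a y = ∑ k, w k * ∫ x, fS k x y * pS k x ∂μ)
    (hb : ∀ y, b y = ∫ x, fT x y * pT x ∂μ)
    (ha_simplex : a ∈ stdSimplex ℝ (Fin C)) (hb_simplex : b ∈ stdSimplex ℝ (Fin C)) :
    Real.sqrt (2 * ∑ y, (Real.sqrt (a y) - Real.sqrt (b y)) ^ 2)
      ≤ Real.sqrt (∑ k, w k *
            ∫ x, (2 * ∑ i, (Real.sqrt (hhat (g x) i) - Real.sqrt (fS k x i)) ^ 2)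
              * pS k x ∂μ)
        + Real.sqrt (2 * ∫ z,
            (Real.sqrt (pgT z) - Real.sqrt (∑ k, w k * pgS k z)) ^ 2 ∂ν)
        + Real.sqrt (∫ x,
            (2 * ∑ i, (Real.sqrt (hhat (g x) i) - Real.sqrt (fT x i)) ^ 2)
              * pT x ∂μ) :=
  tradeoff_lower_bound_general_general μ ν K C w hw_nonneg pS pT hpS_nonneg hpS_prob hpT_nonneg
    hpT_prob fS fT hfS_meas hfS_simplex hfT_meas hfT_simplex g hg hhat hhat_meas hhat_simplex pgS
    pgT hpgS_meas hpgS_nonneg hpgT_meas hpgT_nonneg hmapS hmapT a b ha hb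
end

section
/- Let (X, μ) and (Z, ν) be measure spaces with σ-finite measures, π a probability vector, P^{S,1},…,P^{S,K}, P^T probability measures on X with densities w.r.t. μ and labeling functions f^{S,1},…,f^{S,K}, f^T : X → Y_Δ, g : X → Z measurable such that each g_#P^{S,i} and g_#P^T has a density w.r.t. ν, and ĥ : Z → Y_Δ measurable. Let a ∈ Y_Δ be the source-mixture label marginal with a_y = Σ_{i=1}^K π_i ∫ f^{S,i}(x,y) p^{S,i}(x) dμ(x), and b ∈ Y_Δ the target label marginal with b_y = ∫ f^T(x,y) p^T(x) dμ(x). Then, with losses taken to be the Hellinger loss, d_{1/2}(a, b) ≤ [ Σ_{i=1}^K π_i L(ĥ∘g, f^{S,i}, P^{S,i}) ]^{1/2} + Σ_{i=1}^K Σ_{j=1}^K (√(π_j)/K) · d_{1/2}( g_#P^{S,i}, g_#P^{S,j} ) + Σ_{i=1}^K Σ_{j=1}^K (√(π_j)/K) · d_{1/2}( g_#P^T, g_#P^{S,i} ) + L(ĥ∘g, f^T, P^T)^{1/2}. -/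
open MeasureTheory Real
open scoped ENNReal NNReal

section tradeoffHelpers
variable {α : Type*} {β : Type*} [MeasurableSpace α] [MeasurableSpace β]
  {μ : Measure α} {ν : Measure β}

lemma my_integrable_of_integral_eq_one {p : α → ℝ} (h : ∫ x, p x ∂μ = 1) :
    Integrable p μ := by
  by_contra hc
  rw [integral_undef hc] at h
  norm_num at h

lemma my_sq_sqrt_sub {u v : ℝ} (hu : 0 ≤ u) (hv : 0 ≤ v) :
    (Real.sqrt u - Real.sqrt v) ^ 2 = u + v - 2 * Real.sqrt (u * v) := by
  rw [sub_sq, Real.sq_sqrt hu, Real.sq_sqrt hv, Real.sqrt_mul hu]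
  ring

lemma my_sqrt_sub_sq_le {u v : ℝ} (hu : 0 ≤ u) (hv : 0 ≤ v) :
    (Real.sqrt u - Real.sqrt v) ^ 2 ≤ u + v := by
  rw [my_sq_sqrt_sub hu hv]
  have : 0 ≤ Real.sqrt (u * v) := Real.sqrt_nonneg _
  linarith

lemma my_integrable_sqrt_mul {u v : α → ℝ} (hu : Integrable u μ) (hv : Integrable v μ)
    (hu0 : ∀ x, 0 ≤ u x) (hv0 : ∀ x, 0 ≤ v x) :
    Integrable (fun x => Real.sqrt (u x * v x)) μ := by
  refine (hu.add hv).mono'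
    (continuous_sqrt.comp_aestronglyMeasurable
      (hu.aestronglyMeasurable.mul hv.aestronglyMeasurable)) ?_
  refine Filter.Eventually.of_forall fun x => ?_
  rw [Real.norm_eq_abs, abs_of_nonneg (Real.sqrt_nonneg _)]
  have h1 : u x * v x ≤ (u x + v x) ^ 2 := by nlinarith [hu0 x, hv0 x]
  calc Real.sqrt (u x * v x) ≤ Real.sqrt ((u x + v x) ^ 2) := Real.sqrt_le_sqrt h1
    _ = u x + v x := Real.sqrt_sq (by linarith [hu0 x, hv0 x])

lemma my_integral_sqrt_mul_le {u v : α → ℝ} (hu : Integrable u μ) (hv : Integrable v μ)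
    (hu0 : ∀ x, 0 ≤ u x) (hv0 : ∀ x, 0 ≤ v x) :
    ∫ x, Real.sqrt (u x * v x) ∂μ
      ≤ Real.sqrt (∫ x, u x ∂μ) * Real.sqrt (∫ x, v x ∂μ) := by
  set A := ∫ x, u x ∂μ with hA
  set B := ∫ x, v x ∂μ with hB
  have hA0 : 0 ≤ A := integral_nonneg hu0
  have hB0 : 0 ≤ B := integral_nonneg hv0
  have hint : Integrable (fun x => Real.sqrt (u x * v x)) μ :=
    my_integrable_sqrt_mul hu hv hu0 hv0
  rcases eq_or_lt_of_le hA0 with hA0' | hApos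
  · -- A = 0 : u = 0 a.e.
    have hu_ae : u =ᵐ[μ] 0 := by
      rw [← integral_eq_zero_iff_of_nonneg hu0 hu]; exact hA0'.symm
    have h0 : ∫ x, Real.sqrt (u x * v x) ∂μ = 0 := by
      have : (fun x => Real.sqrt (u x * v x)) =ᵐ[μ] (fun _ => (0:ℝ)) := by
        filter_upwards [hu_ae] with x hx
        simp [hx]
      rw [integral_congr_ae this, integral_zero]
    rw [h0]
    positivity
  rcases eq_or_lt_of_le hB0 with hB0' | hBpos
  · have hv_ae : v =ᵐ[μ] 0 := by
      rw [← integral_eq_zero_iff_of_nonneg hv0 hv]; exact hB0'.symm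
    have h0 : ∫ x, Real.sqrt (u x * v x) ∂μ = 0 := by
      have : (fun x => Real.sqrt (u x * v x)) =ᵐ[μ] (fun _ => (0:ℝ)) := by
        filter_upwards [hv_ae] with x hx
        simp [hx]
      rw [integral_congr_ae this, integral_zero]
    rw [h0]
    positivity
  -- pointwise AM-GM
  have hpt : ∀ x, 2 * (Real.sqrt A * Real.sqrt B) * Real.sqrt (u x * v x)
      ≤ B * u x + A * v x := by
    intro x
    have h1 := sq_nonneg (Real.sqrt B * Real.sqrt (u x) - Real.sqrt A * Real.sqrt (v x))
    have e1 : Real.sqrt (u x * v x) = Real.sqrt (u x) * Real.sqrt (v x) :=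
      Real.sqrt_mul (hu0 x) _
    have e2 : (Real.sqrt B * Real.sqrt (u x) - Real.sqrt A * Real.sqrt (v x)) ^ 2
        = B * u x + A * v x
          - 2 * (Real.sqrt A * Real.sqrt B) * (Real.sqrt (u x) * Real.sqrt (v x)) := by
      rw [sub_sq, mul_pow, mul_pow, Real.sq_sqrt hB0, Real.sq_sqrt hA0,
        Real.sq_sqrt (hu0 x), Real.sq_sqrt (hv0 x)]
      ring
    rw [e1]
    linarith [h1, e2.symm.le, e2.le]
  have hmono : ∫ x, 2 * (Real.sqrt A * Real.sqrt B) * Real.sqrt (u x * v x) ∂μ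
      ≤ ∫ x, (B * u x + A * v x) ∂μ :=
    integral_mono (hint.const_mul _) ((hu.const_mul B).add (hv.const_mul A)) hpt
  rw [integral_const_mul] at hmono
  rw [integral_add (hu.const_mul B) (hv.const_mul A), integral_const_mul,
    integral_const_mul] at hmono
  have hs : 0 < Real.sqrt A * Real.sqrt B := by positivity
  have e2 : (Real.sqrt A * Real.sqrt B) * (Real.sqrt A * Real.sqrt B) = A * B := by
    rw [mul_mul_mul_comm, Real.mul_self_sqrt hA0, Real.mul_self_sqrt hB0]
  have key : (2 * (Real.sqrt A * Real.sqrt B)) * (∫ x, Real.sqrt (u x * v x) ∂μ)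
      ≤ (2 * (Real.sqrt A * Real.sqrt B)) * (Real.sqrt A * Real.sqrt B) := by
    have hAA : B * A + A * B = 2 * (A * B) := by ring
    nlinarith [hmono, e2]
  exact le_of_mul_le_mul_left key (by linarith)


lemma my_sq_sqrt_integral_le {u v : α → ℝ} (hu : Integrable u μ) (hv : Integrable v μ)
    (hu0 : ∀ x, 0 ≤ u x) (hv0 : ∀ x, 0 ≤ v x) :
    (Real.sqrt (∫ x, u x ∂μ) - Real.sqrt (∫ x, v x ∂μ)) ^ 2
      ≤ ∫ x, (Real.sqrt (u x) - Real.sqrt (v x)) ^ 2 ∂μ := by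
  have hint : Integrable (fun x => Real.sqrt (u x * v x)) μ :=
    my_integrable_sqrt_mul hu hv hu0 hv0
  have hrw : ∫ x, (Real.sqrt (u x) - Real.sqrt (v x)) ^ 2 ∂μ
      = (∫ x, u x ∂μ) + (∫ x, v x ∂μ) - 2 * ∫ x, Real.sqrt (u x * v x) ∂μ := by
    have e : (fun x => (Real.sqrt (u x) - Real.sqrt (v x)) ^ 2)
        = fun x => u x + v x - 2 * Real.sqrt (u x * v x) := by
      funext x; exact my_sq_sqrt_sub (hu0 x) (hv0 x)
    rw [e, integral_sub (f := fun x => u x + v x) (by exact hu.add hv)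
      (hint.const_mul 2), integral_add hu hv, integral_const_mul]
  rw [hrw, my_sq_sqrt_sub (integral_nonneg hu0) (integral_nonneg hv0)]
  have h1 := my_integral_sqrt_mul_le hu hv hu0 hv0
  have h2 : Real.sqrt ((∫ x, u x ∂μ) * ∫ x, v x ∂μ)
      = Real.sqrt (∫ x, u x ∂μ) * Real.sqrt (∫ x, v x ∂μ) :=
    Real.sqrt_mul (integral_nonneg hu0) _
  linarith

lemma my_finite_convexity {K : ℕ} (w u v : Fin K → ℝ)
    (hw : ∀ i, 0 ≤ w i) (hu : ∀ i, 0 ≤ u i) (hv : ∀ i, 0 ≤ v i) :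
    (Real.sqrt (∑ i, w i * u i) - Real.sqrt (∑ i, w i * v i)) ^ 2
      ≤ ∑ i, w i * (Real.sqrt (u i) - Real.sqrt (v i)) ^ 2 := by
  have hA : 0 ≤ ∑ i, w i * u i :=
    Finset.sum_nonneg fun i _ => mul_nonneg (hw i) (hu i)
  have hB : 0 ≤ ∑ i, w i * v i :=
    Finset.sum_nonneg fun i _ => mul_nonneg (hw i) (hv i)
  have hCS : ∑ i, w i * Real.sqrt (u i * v i)
      ≤ Real.sqrt (∑ i, w i * u i) * Real.sqrt (∑ i, w i * v i) := by
    have h := Real.sum_sqrt_mul_sqrt_le (Finset.univ (α := Fin K))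
      (f := fun i => w i * u i) (g := fun i => w i * v i)
      (fun i => mul_nonneg (hw i) (hu i)) (fun i => mul_nonneg (hw i) (hv i))
    refine le_trans (le_of_eq (Finset.sum_congr rfl fun i _ => ?_)) h
    have hws : Real.sqrt (w i) * Real.sqrt (w i) = w i := Real.mul_self_sqrt (hw i)
    rw [Real.sqrt_mul (hw i) (u i), Real.sqrt_mul (hw i) (v i),
      Real.sqrt_mul (hu i) (v i)]
    linear_combination (-(Real.sqrt (u i) * Real.sqrt (v i))) * hws
  have hexp : ∑ i, w i * (Real.sqrt (u i) - Real.sqrt (v i)) ^ 2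
      = (∑ i, w i * u i) + (∑ i, w i * v i)
        - 2 * ∑ i, w i * Real.sqrt (u i * v i) := by
    rw [← Finset.sum_add_distrib, Finset.mul_sum, ← Finset.sum_sub_distrib]
    refine Finset.sum_congr rfl fun i _ => ?_
    rw [my_sq_sqrt_sub (hu i) (hv i)]
    ring
  rw [hexp, my_sq_sqrt_sub hA hB]
  have h2 : Real.sqrt ((∑ i, w i * u i) * ∑ i, w i * v i)
      = Real.sqrt (∑ i, w i * u i) * Real.sqrt (∑ i, w i * v i) :=
    Real.sqrt_mul hA _
  linarith

lemma my_sqrt_sum_le {K : ℕ} (x : Fin K → ℝ) (hx : ∀ i, 0 ≤ x i) :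
    Real.sqrt (∑ i, x i) ≤ ∑ i, Real.sqrt (x i) := by
  have h1 : ∑ i, x i ≤ (∑ i, Real.sqrt (x i)) ^ 2 := by
    have h := Finset.sum_sq_le_sq_sum_of_nonneg
      (s := Finset.univ (α := Fin K)) (f := fun i => Real.sqrt (x i))
      (fun i _ => Real.sqrt_nonneg _)
    calc ∑ i, x i = ∑ i, (Real.sqrt (x i)) ^ 2 := by
          refine Finset.sum_congr rfl fun i _ => ?_
          rw [Real.sq_sqrt (hx i)]
      _ ≤ _ := h
  calc Real.sqrt (∑ i, x i) ≤ Real.sqrt ((∑ i, Real.sqrt (x i)) ^ 2) :=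
        Real.sqrt_le_sqrt h1
    _ = _ := Real.sqrt_sq (Finset.sum_nonneg fun i _ => Real.sqrt_nonneg _)

lemma my_integrable_mul_of_sq {f g : α → ℝ} (hf2 : Integrable (fun x => f x ^ 2) μ)
    (hg2 : Integrable (fun x => g x ^ 2) μ) (hf : AEStronglyMeasurable f μ)
    (hg : AEStronglyMeasurable g μ) :
    Integrable (fun x => f x * g x) μ := by
  refine Integrable.mono' (g := fun x => f x ^ 2 + g x ^ 2) (by exact hf2.add hg2)
    (hf.mul hg) (Filter.Eventually.of_forall fun x => ?_)
  show ‖f x * g x‖ ≤ f x ^ 2 + g x ^ 2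
  rw [Real.norm_eq_abs, abs_mul]
  nlinarith [sq_abs (f x), sq_abs (g x), sq_nonneg (|f x| - |g x|),
    abs_nonneg (f x), abs_nonneg (g x)]

lemma my_integral_mul_le {f g : α → ℝ} (hf2 : Integrable (fun x => f x ^ 2) μ)
    (hg2 : Integrable (fun x => g x ^ 2) μ) (hf : AEStronglyMeasurable f μ)
    (hg : AEStronglyMeasurable g μ) :
    ∫ x, f x * g x ∂μ
      ≤ Real.sqrt (∫ x, f x ^ 2 ∂μ) * Real.sqrt (∫ x, g x ^ 2 ∂μ) := by
  have key := my_integral_sqrt_mul_le hf2 hg2 (fun x => sq_nonneg _) (fun x => sq_nonneg _)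
  have hfg : Integrable (fun x => f x * g x) μ := my_integrable_mul_of_sq hf2 hg2 hf hg
  have e : (fun x => Real.sqrt (f x ^ 2 * g x ^ 2)) = fun x => |f x * g x| := by
    funext x
    rw [← mul_pow, Real.sqrt_sq_eq_abs]
  rw [e] at key
  calc ∫ x, f x * g x ∂μ ≤ ∫ x, |f x * g x| ∂μ :=
        integral_mono hfg hfg.abs fun x => le_abs_self _
    _ ≤ _ := key

lemma my_L2_triangle {f g : α → ℝ} (hf2 : Integrable (fun x => f x ^ 2) μ)
    (hg2 : Integrable (fun x => g x ^ 2) μ) (hf : AEStronglyMeasurable f μ)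
    (hg : AEStronglyMeasurable g μ) :
    Real.sqrt (∫ x, (f x + g x) ^ 2 ∂μ)
      ≤ Real.sqrt (∫ x, f x ^ 2 ∂μ) + Real.sqrt (∫ x, g x ^ 2 ∂μ) := by
  have hfg : Integrable (fun x => f x * g x) μ := my_integrable_mul_of_sq hf2 hg2 hf hg
  have hexp : ∫ x, (f x + g x) ^ 2 ∂μ
      = (∫ x, f x ^ 2 ∂μ) + 2 * (∫ x, f x * g x ∂μ) + ∫ x, g x ^ 2 ∂μ := by
    have e : (fun x => (f x + g x) ^ 2)
        = fun x => (f x ^ 2 + 2 * (f x * g x)) + g x ^ 2 := by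
      funext x; ring
    rw [e, integral_add (f := fun x => f x ^ 2 + 2 * (f x * g x))
      (by exact hf2.add (hfg.const_mul 2)) hg2,
      integral_add hf2 (hfg.const_mul 2), integral_const_mul]
  have hFG := my_integral_mul_le hf2 hg2 hf hg
  have hF0 : 0 ≤ ∫ x, f x ^ 2 ∂μ := integral_nonneg fun x => sq_nonneg _
  have hG0 : 0 ≤ ∫ x, g x ^ 2 ∂μ := integral_nonneg fun x => sq_nonneg _
  have h4 : ∫ x, (f x + g x) ^ 2 ∂μ
      ≤ (Real.sqrt (∫ x, f x ^ 2 ∂μ) + Real.sqrt (∫ x, g x ^ 2 ∂μ)) ^ 2 := by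
    have e2 : (Real.sqrt (∫ x, f x ^ 2 ∂μ) + Real.sqrt (∫ x, g x ^ 2 ∂μ)) ^ 2
        = (∫ x, f x ^ 2 ∂μ)
          + 2 * (Real.sqrt (∫ x, f x ^ 2 ∂μ) * Real.sqrt (∫ x, g x ^ 2 ∂μ))
          + ∫ x, g x ^ 2 ∂μ := by
      rw [add_sq, Real.sq_sqrt hF0, Real.sq_sqrt hG0]
      ring
    linarith
  calc Real.sqrt (∫ x, (f x + g x) ^ 2 ∂μ)
      ≤ Real.sqrt ((Real.sqrt (∫ x, f x ^ 2 ∂μ) + Real.sqrt (∫ x, g x ^ 2 ∂μ)) ^ 2) :=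
        Real.sqrt_le_sqrt h4
    _ = _ := Real.sqrt_sq (by positivity)

lemma my_discrete_L2_triangle {C : ℕ} (f g : Fin C → ℝ) :
    Real.sqrt (∑ y, (f y + g y) ^ 2)
      ≤ Real.sqrt (∑ y, f y ^ 2) + Real.sqrt (∑ y, g y ^ 2) := by
  have hCS := Real.sum_mul_le_sqrt_mul_sqrt (Finset.univ (α := Fin C)) f g
  have hF0 : 0 ≤ ∑ y, f y ^ 2 := Finset.sum_nonneg fun y _ => sq_nonneg _
  have hG0 : 0 ≤ ∑ y, g y ^ 2 := Finset.sum_nonneg fun y _ => sq_nonneg _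
  have hexp : ∑ y, (f y + g y) ^ 2
      = (∑ y, f y ^ 2) + 2 * (∑ y, f y * g y) + ∑ y, g y ^ 2 := by
    rw [Finset.mul_sum, ← Finset.sum_add_distrib, ← Finset.sum_add_distrib]
    refine Finset.sum_congr rfl fun y _ => ?_
    ring
  have h4 : ∑ y, (f y + g y) ^ 2
      ≤ (Real.sqrt (∑ y, f y ^ 2) + Real.sqrt (∑ y, g y ^ 2)) ^ 2 := by
    have e2 : (Real.sqrt (∑ y, f y ^ 2) + Real.sqrt (∑ y, g y ^ 2)) ^ 2
        = (∑ y, f y ^ 2)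
          + 2 * (Real.sqrt (∑ y, f y ^ 2) * Real.sqrt (∑ y, g y ^ 2))
          + ∑ y, g y ^ 2 := by
      rw [add_sq, Real.sq_sqrt hF0, Real.sq_sqrt hG0]
      ring
    linarith
  calc Real.sqrt (∑ y, (f y + g y) ^ 2)
      ≤ Real.sqrt ((Real.sqrt (∑ y, f y ^ 2) + Real.sqrt (∑ y, g y ^ 2)) ^ 2) :=
        Real.sqrt_le_sqrt h4
    _ = _ := Real.sqrt_sq (by positivity)

lemma my_hd_triangle {C : ℕ} (u v t : Fin C → ℝ) :
    Real.sqrt (2 * ∑ y, (Real.sqrt (u y) - Real.sqrt (t y)) ^ 2)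
      ≤ Real.sqrt (2 * ∑ y, (Real.sqrt (u y) - Real.sqrt (v y)) ^ 2)
        + Real.sqrt (2 * ∑ y, (Real.sqrt (v y) - Real.sqrt (t y)) ^ 2) := by
  have h1 := my_discrete_L2_triangle (fun y => Real.sqrt (u y) - Real.sqrt (v y))
    (fun y => Real.sqrt (v y) - Real.sqrt (t y))
  have e : (∑ y, ((Real.sqrt (u y) - Real.sqrt (v y))
      + (Real.sqrt (v y) - Real.sqrt (t y))) ^ 2)
      = ∑ y, (Real.sqrt (u y) - Real.sqrt (t y)) ^ 2 :=
    Finset.sum_congr rfl fun y _ => by ring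
  rw [e] at h1
  rw [Real.sqrt_mul (by norm_num : (0:ℝ) ≤ 2), Real.sqrt_mul (by norm_num : (0:ℝ) ≤ 2),
    Real.sqrt_mul (by norm_num : (0:ℝ) ≤ 2), ← mul_add]
  exact mul_le_mul_of_nonneg_left h1 (Real.sqrt_nonneg 2)

lemma my_latent_triangle {p q r : α → ℝ} (hpm : Measurable p) (hqm : Measurable q)
    (hrm : Measurable r) (hp0 : ∀ x, 0 ≤ p x) (hq0 : ∀ x, 0 ≤ q x) (hr0 : ∀ x, 0 ≤ r x)
    (hp : Integrable p μ) (hq : Integrable q μ) (hr : Integrable r μ) :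
    Real.sqrt (2 * ∫ x, (Real.sqrt (p x) - Real.sqrt (r x)) ^ 2 ∂μ)
      ≤ Real.sqrt (2 * ∫ x, (Real.sqrt (p x) - Real.sqrt (q x)) ^ 2 ∂μ)
        + Real.sqrt (2 * ∫ x, (Real.sqrt (q x) - Real.sqrt (r x)) ^ 2 ∂μ) := by
  have hint : ∀ (a b : α → ℝ), Measurable a → Measurable b → (∀ x, 0 ≤ a x) →
      (∀ x, 0 ≤ b x) → Integrable a μ → Integrable b μ →
      Integrable (fun x => (Real.sqrt (a x) - Real.sqrt (b x)) ^ 2) μ := by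
    intro a b ham hbm ha0 hb0 hai hbi
    refine (hai.add hbi).mono'
      (((ham.sqrt.sub hbm.sqrt).pow_const 2).aestronglyMeasurable)
      (Filter.Eventually.of_forall fun x => ?_)
    rw [Real.norm_eq_abs, abs_of_nonneg (sq_nonneg _)]
    exact my_sqrt_sub_sq_le (ha0 x) (hb0 x)
  have h1 := my_L2_triangle (μ := μ)
    (f := fun x => Real.sqrt (p x) - Real.sqrt (q x))
    (g := fun x => Real.sqrt (q x) - Real.sqrt (r x))
    (hint p q hpm hqm hp0 hq0 hp hq) (hint q r hqm hrm hq0 hr0 hq hr)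
    ((hpm.sqrt.sub hqm.sqrt).aestronglyMeasurable)
    ((hqm.sqrt.sub hrm.sqrt).aestronglyMeasurable)
  have e : (fun x => ((Real.sqrt (p x) - Real.sqrt (q x))
      + (Real.sqrt (q x) - Real.sqrt (r x))) ^ 2)
      = fun x => (Real.sqrt (p x) - Real.sqrt (r x)) ^ 2 := by
    funext x; ring
  rw [e] at h1
  rw [Real.sqrt_mul (by norm_num : (0:ℝ) ≤ 2), Real.sqrt_mul (by norm_num : (0:ℝ) ≤ 2),
    Real.sqrt_mul (by norm_num : (0:ℝ) ≤ 2), ← mul_add]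
  exact mul_le_mul_of_nonneg_left h1 (Real.sqrt_nonneg 2)


lemma my_integrable_pushforward {p : α → ℝ} {q : β → ℝ} {g : α → β}
    (hg : Measurable g) (hp0 : ∀ x, 0 ≤ p x) (hp_int : Integrable p μ)
    (hq_meas : Measurable q) (hq0 : ∀ z, 0 ≤ q z)
    (hmap : Measure.map g (μ.withDensity fun x => ENNReal.ofReal (p x))
      = ν.withDensity fun z => ENNReal.ofReal (q z)) :
    Integrable q ν := by
  have h1 : (ν.withDensity fun z => ENNReal.ofReal (q z)) Set.univ
      = (μ.withDensity fun x => ENNReal.ofReal (p x)) Set.univ := by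
    rw [← hmap, Measure.map_apply hg MeasurableSet.univ, Set.preimage_univ]
  rw [withDensity_apply _ MeasurableSet.univ, withDensity_apply _ MeasurableSet.univ,
    setLIntegral_univ, setLIntegral_univ] at h1
  have h2 : ∫⁻ x, ENNReal.ofReal (p x) ∂μ = ENNReal.ofReal (∫ x, p x ∂μ) :=
    (ofReal_integral_eq_lintegral_ofReal hp_int (Filter.Eventually.of_forall hp0)).symm
  refine ⟨hq_meas.aestronglyMeasurable, ?_⟩
  rw [hasFiniteIntegral_iff_ofReal (Filter.Eventually.of_forall hq0), h1, h2]
  exact ENNReal.ofReal_lt_top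

lemma my_integral_cov {p : α → ℝ} {q : β → ℝ} {g : α → β}
    (hg : Measurable g) (hp_meas : Measurable p) (hp0 : ∀ x, 0 ≤ p x)
    (hq_meas : Measurable q) (hq0 : ∀ z, 0 ≤ q z)
    (hmap : Measure.map g (μ.withDensity fun x => ENNReal.ofReal (p x))
      = ν.withDensity fun z => ENNReal.ofReal (q z))
    {F : β → ℝ} (hF : Measurable F) :
    ∫ x, F (g x) * p x ∂μ = ∫ z, F z * q z ∂ν := by
  have hq' : (fun z => ENNReal.ofReal (q z)) = fun z => ((q z).toNNReal : ℝ≥0∞) := rfl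
  have hp' : (fun x => ENNReal.ofReal (p x)) = fun x => ((p x).toNNReal : ℝ≥0∞) := rfl
  have h1 : ∫ z, F z ∂(ν.withDensity fun z => ENNReal.ofReal (q z))
      = ∫ z, F z * q z ∂ν := by
    rw [hq', integral_withDensity_eq_integral_smul hq_meas.real_toNNReal]
    refine integral_congr_ae (Filter.Eventually.of_forall fun z => ?_)
    simp [NNReal.smul_def, Real.coe_toNNReal _ (hq0 z), mul_comm]
  have h2 : ∫ x, F (g x) ∂(μ.withDensity fun x => ENNReal.ofReal (p x))
      = ∫ x, F (g x) * p x ∂μ := by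
    rw [hp', integral_withDensity_eq_integral_smul hp_meas.real_toNNReal]
    refine integral_congr_ae (Filter.Eventually.of_forall fun x => ?_)
    simp [NNReal.smul_def, Real.coe_toNNReal _ (hp0 x), mul_comm]
  have h3 : ∫ z, F z ∂(Measure.map g (μ.withDensity fun x => ENNReal.ofReal (p x)))
      = ∫ x, F (g x) ∂(μ.withDensity fun x => ENNReal.ofReal (p x)) :=
    integral_map hg.aemeasurable hF.aestronglyMeasurable
  rw [← h1, ← hmap, h3, h2]


lemma my_simplex_le_one {C : ℕ} {u : Fin C → ℝ} (hu : u ∈ stdSimplex ℝ (Fin C))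
    (y : Fin C) : u y ≤ 1 := by
  have h := Finset.single_le_sum (f := fun c => u c) (fun c _ => hu.1 c)
    (Finset.mem_univ y)
  rw [hu.2] at h
  exact h

lemma my_integrable_simplex_mul {C : ℕ} {p : α → ℝ} (hp_meas : Measurable p)
    (hp0 : ∀ x, 0 ≤ p x) (hp_int : Integrable p μ)
    {F : α → Fin C → ℝ} (hF_meas : Measurable F)
    (hF : ∀ x, F x ∈ stdSimplex ℝ (Fin C)) (y : Fin C) :
    Integrable (fun x => F x y * p x) μ := by
  refine hp_int.mono' (((measurable_pi_apply y).comp hF_meas).mul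
    hp_meas).aestronglyMeasurable (Filter.Eventually.of_forall fun x => ?_)
  rw [Real.norm_eq_abs, abs_of_nonneg (mul_nonneg ((hF x).1 y) (hp0 x))]
  exact mul_le_of_le_one_left (hp0 x) (my_simplex_le_one (hF x) y)

lemma my_marginal_bound {C : ℕ} {p : α → ℝ} (hp_meas : Measurable p)
    (hp0 : ∀ x, 0 ≤ p x) (hp_int : Integrable p μ)
    {F G : α → Fin C → ℝ} (hF_meas : Measurable F)
    (hF : ∀ x, F x ∈ stdSimplex ℝ (Fin C)) (hG_meas : Measurable G)
    (hG : ∀ x, G x ∈ stdSimplex ℝ (Fin C)) :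
    2 * ∑ y, (Real.sqrt (∫ x, F x y * p x ∂μ)
        - Real.sqrt (∫ x, G x y * p x ∂μ)) ^ 2
      ≤ ∫ x, (2 * ∑ c, (Real.sqrt (F x c) - Real.sqrt (G x c)) ^ 2) * p x ∂μ := by
  have hFy : ∀ y, Measurable fun x => F x y :=
    fun y => (measurable_pi_apply y).comp hF_meas
  have hGy : ∀ y, Measurable fun x => G x y :=
    fun y => (measurable_pi_apply y).comp hG_meas
  have hIntF : ∀ y, Integrable (fun x => F x y * p x) μ :=
    fun y => my_integrable_simplex_mul hp_meas hp0 hp_int hF_meas hF y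
  have hIntG : ∀ y, Integrable (fun x => G x y * p x) μ :=
    fun y => my_integrable_simplex_mul hp_meas hp0 hp_int hG_meas hG y
  have hIntT : ∀ y, Integrable
      (fun x => (Real.sqrt (F x y) - Real.sqrt (G x y)) ^ 2 * p x) μ := by
    intro y
    refine Integrable.mono' (g := fun x => 2 * p x) (hp_int.const_mul 2)
      (((((hFy y).sqrt).sub ((hGy y).sqrt)).pow_const 2).mul
        hp_meas).aestronglyMeasurable (Filter.Eventually.of_forall fun x => ?_)
    rw [Real.norm_eq_abs, abs_of_nonneg (mul_nonneg (sq_nonneg _) (hp0 x))]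
    have h1 : (Real.sqrt (F x y) - Real.sqrt (G x y)) ^ 2 ≤ F x y + G x y :=
      my_sqrt_sub_sq_le ((hF x).1 y) ((hG x).1 y)
    have h2 : F x y + G x y ≤ 2 := by
      have := my_simplex_le_one (hF x) y
      have := my_simplex_le_one (hG x) y
      linarith
    exact mul_le_mul_of_nonneg_right (h1.trans h2) (hp0 x)
  have key : ∀ y, (Real.sqrt (∫ x, F x y * p x ∂μ)
      - Real.sqrt (∫ x, G x y * p x ∂μ)) ^ 2
      ≤ ∫ x, (Real.sqrt (F x y) - Real.sqrt (G x y)) ^ 2 * p x ∂μ := by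
    intro y
    have h := my_sq_sqrt_integral_le (hIntF y) (hIntG y)
      (fun x => mul_nonneg ((hF x).1 y) (hp0 x))
      (fun x => mul_nonneg ((hG x).1 y) (hp0 x))
    refine h.trans (le_of_eq (integral_congr_ae
      (Filter.Eventually.of_forall fun x => ?_)))
    show (Real.sqrt (F x y * p x) - Real.sqrt (G x y * p x)) ^ 2
        = (Real.sqrt (F x y) - Real.sqrt (G x y)) ^ 2 * p x
    rw [Real.sqrt_mul ((hF x).1 y), Real.sqrt_mul ((hG x).1 y), ← sub_mul,
      mul_pow, Real.sq_sqrt (hp0 x)]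
  have hRHS : ∫ x, (2 * ∑ c, (Real.sqrt (F x c) - Real.sqrt (G x c)) ^ 2) * p x ∂μ
      = 2 * ∑ y, ∫ x, (Real.sqrt (F x y) - Real.sqrt (G x y)) ^ 2 * p x ∂μ := by
    have e1 : (fun x => (2 * ∑ c, (Real.sqrt (F x c) - Real.sqrt (G x c)) ^ 2) * p x)
        = fun x => ∑ c, 2 * ((Real.sqrt (F x c) - Real.sqrt (G x c)) ^ 2 * p x) := by
      funext x
      rw [Finset.mul_sum, Finset.sum_mul]
      exact Finset.sum_congr rfl fun c _ => by ring
    rw [e1, integral_finset_sum _ (fun c _ => (hIntT c).const_mul 2), Finset.mul_sum]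
    exact Finset.sum_congr rfl fun c _ => integral_const_mul 2 _
  rw [hRHS]
  have hs : ∑ y, (Real.sqrt (∫ x, F x y * p x ∂μ)
      - Real.sqrt (∫ x, G x y * p x ∂μ)) ^ 2
      ≤ ∑ y, ∫ x, (Real.sqrt (F x y) - Real.sqrt (G x y)) ^ 2 * p x ∂μ :=
    Finset.sum_le_sum fun y _ => key y
  linarith

lemma my_latent_bound {C : ℕ} {p q : α → ℝ} (hp_meas : Measurable p)
    (hq_meas : Measurable q) (hp0 : ∀ z, 0 ≤ p z) (hq0 : ∀ z, 0 ≤ q z)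
    (hp_int : Integrable p μ) (hq_int : Integrable q μ)
    {h : α → Fin C → ℝ} (hh_meas : Measurable h)
    (hh : ∀ z, h z ∈ stdSimplex ℝ (Fin C)) :
    2 * ∑ y, (Real.sqrt (∫ z, h z y * p z ∂μ)
        - Real.sqrt (∫ z, h z y * q z ∂μ)) ^ 2
      ≤ 2 * ∫ z, (Real.sqrt (p z) - Real.sqrt (q z)) ^ 2 ∂μ := by
  have hhy : ∀ y, Measurable fun z => h z y :=
    fun y => (measurable_pi_apply y).comp hh_meas
  have hIntP : ∀ y, Integrable (fun z => h z y * p z) μ :=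
    fun y => my_integrable_simplex_mul hp_meas hp0 hp_int hh_meas hh y
  have hIntQ : ∀ y, Integrable (fun z => h z y * q z) μ :=
    fun y => my_integrable_simplex_mul hq_meas hq0 hq_int hh_meas hh y
  have hIntT : ∀ y, Integrable
      (fun z => h z y * (Real.sqrt (p z) - Real.sqrt (q z)) ^ 2) μ := by
    intro y
    refine Integrable.mono' (g := fun z => p z + q z) (by exact hp_int.add hq_int)
      ((hhy y).mul (((hp_meas.sqrt).sub (hq_meas.sqrt)).pow_const
        2)).aestronglyMeasurable (Filter.Eventually.of_forall fun z => ?_)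
    rw [Real.norm_eq_abs, abs_of_nonneg (mul_nonneg ((hh z).1 y) (sq_nonneg _))]
    calc h z y * (Real.sqrt (p z) - Real.sqrt (q z)) ^ 2
        ≤ 1 * (Real.sqrt (p z) - Real.sqrt (q z)) ^ 2 :=
          mul_le_mul_of_nonneg_right (my_simplex_le_one (hh z) y) (sq_nonneg _)
      _ = (Real.sqrt (p z) - Real.sqrt (q z)) ^ 2 := one_mul _
      _ ≤ p z + q z := my_sqrt_sub_sq_le (hp0 z) (hq0 z)
  have key : ∀ y, (Real.sqrt (∫ z, h z y * p z ∂μ)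
      - Real.sqrt (∫ z, h z y * q z ∂μ)) ^ 2
      ≤ ∫ z, h z y * (Real.sqrt (p z) - Real.sqrt (q z)) ^ 2 ∂μ := by
    intro y
    have hk := my_sq_sqrt_integral_le (hIntP y) (hIntQ y)
      (fun z => mul_nonneg ((hh z).1 y) (hp0 z))
      (fun z => mul_nonneg ((hh z).1 y) (hq0 z))
    refine hk.trans (le_of_eq (integral_congr_ae
      (Filter.Eventually.of_forall fun z => ?_)))
    show (Real.sqrt (h z y * p z) - Real.sqrt (h z y * q z)) ^ 2
        = h z y * (Real.sqrt (p z) - Real.sqrt (q z)) ^ 2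
    rw [Real.sqrt_mul ((hh z).1 y), Real.sqrt_mul ((hh z).1 y), ← mul_sub,
      mul_pow, Real.sq_sqrt ((hh z).1 y)]
  have hsum : ∑ y, ∫ z, h z y * (Real.sqrt (p z) - Real.sqrt (q z)) ^ 2 ∂μ
      = ∫ z, (Real.sqrt (p z) - Real.sqrt (q z)) ^ 2 ∂μ := by
    rw [← integral_finset_sum _ (fun y _ => hIntT y)]
    refine integral_congr_ae (Filter.Eventually.of_forall fun z => ?_)
    show (∑ y, h z y * (Real.sqrt (p z) - Real.sqrt (q z)) ^ 2)
        = (Real.sqrt (p z) - Real.sqrt (q z)) ^ 2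
    rw [← Finset.sum_mul, (hh z).2, one_mul]
  have hs : ∑ y, (Real.sqrt (∫ z, h z y * p z ∂μ)
      - Real.sqrt (∫ z, h z y * q z ∂μ)) ^ 2
      ≤ ∑ y, ∫ z, h z y * (Real.sqrt (p z) - Real.sqrt (q z)) ^ 2 ∂μ :=
    Finset.sum_le_sum fun y _ => key y
  rw [hsum] at hs
  linarith


end tradeoffHelpers

/-- **Theorem 8, part 2 (trade-off bound, compressed form).** The Hellinger distance
between the source-mixture label marginal and the target label marginal is bounded
by the square root of the mixture source Hellinger loss, plus weighted double sums
of source–source and target–source Hellinger distances on the latent space, plus the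
square root of the target Hellinger loss. -/
theorem tradeoff_lower_bound_compressed
    {X Z : Type*} [MeasurableSpace X] [MeasurableSpace Z]
    (μ : Measure X) (ν : Measure Z) [SigmaFinite μ] [SigmaFinite ν]
    (K C : ℕ) (hK : 0 < K) (hC : 0 < C)
    (w : Fin K → ℝ) (hw_nonneg : ∀ k, 0 ≤ w k) (hw_sum : ∑ k, w k = 1)
    -- source and target densities w.r.t. μ
    (pS : Fin K → X → ℝ) (pT : X → ℝ)
    (hpS_meas : ∀ k, Measurable (pS k)) (hpS_nonneg : ∀ k x, 0 ≤ pS k x)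
    (hpS_prob : ∀ k, ∫ x, pS k x ∂μ = 1)
    (hpT_meas : Measurable pT) (hpT_nonneg : ∀ x, 0 ≤ pT x)
    (hpT_prob : ∫ x, pT x ∂μ = 1)
    -- labeling functions
    (fS : Fin K → X → Fin C → ℝ) (fT : X → Fin C → ℝ)
    (hfS_meas : ∀ k, Measurable (fS k))
    (hfS_simplex : ∀ k x, fS k x ∈ stdSimplex ℝ (Fin C))
    (hfT_meas : Measurable fT) (hfT_simplex : ∀ x, fT x ∈ stdSimplex ℝ (Fin C))
    -- feature map and hypothesis on the latent space
    (g : X → Z) (hg : Measurable g)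
    (hhat : Z → Fin C → ℝ) (hhat_meas : Measurable hhat)
    (hhat_simplex : ∀ z, hhat z ∈ stdSimplex ℝ (Fin C))
    -- densities of the pushforward distributions w.r.t. ν
    (pgS : Fin K → Z → ℝ) (pgT : Z → ℝ)
    (hpgS_meas : ∀ k, Measurable (pgS k)) (hpgS_nonneg : ∀ k z, 0 ≤ pgS k z)
    (hpgT_meas : Measurable pgT) (hpgT_nonneg : ∀ z, 0 ≤ pgT z)
    (hmapS : ∀ k, Measure.map g (μ.withDensity fun x => ENNReal.ofReal (pS k x))
      = ν.withDensity fun z => ENNReal.ofReal (pgS k z))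
    (hmapT : Measure.map g (μ.withDensity fun x => ENNReal.ofReal (pT x))
      = ν.withDensity fun z => ENNReal.ofReal (pgT z))
    -- label marginals of the source mixture and the target domain
    (a b : Fin C → ℝ)
    (ha : ∀ y, a y = ∑ i, w i * ∫ x, fS i x y * pS i x ∂μ)
    (hb : ∀ y, b y = ∫ x, fT x y * pT x ∂μ)
    (ha_simplex : a ∈ stdSimplex ℝ (Fin C)) (hb_simplex : b ∈ stdSimplex ℝ (Fin C)) :
    Real.sqrt (2 * ∑ y, (Real.sqrt (a y) - Real.sqrt (b y)) ^ 2)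
      ≤ Real.sqrt (∑ i, w i *
            ∫ x, (2 * ∑ c, (Real.sqrt (hhat (g x) c) - Real.sqrt (fS i x c)) ^ 2)
              * pS i x ∂μ)
        + (∑ i, ∑ j, (Real.sqrt (w j) / (K : ℝ)) *
            Real.sqrt (2 * ∫ z, (Real.sqrt (pgS i z) - Real.sqrt (pgS j z)) ^ 2 ∂ν))
        + (∑ i, ∑ j, (Real.sqrt (w j) / (K : ℝ)) *
            Real.sqrt (2 * ∫ z, (Real.sqrt (pgT z) - Real.sqrt (pgS i z)) ^ 2 ∂ν))
        + Real.sqrt (∫ x,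
            (2 * ∑ c, (Real.sqrt (hhat (g x) c) - Real.sqrt (fT x c)) ^ 2)
              * pT x ∂μ) := by
  have hpS_int : ∀ i, Integrable (pS i) μ :=
    fun i => my_integrable_of_integral_eq_one (hpS_prob i)
  have hpT_int : Integrable pT μ := my_integrable_of_integral_eq_one hpT_prob
  have hpgS_int : ∀ i, Integrable (pgS i) ν := fun i =>
    my_integrable_pushforward hg (hpS_nonneg i) (hpS_int i) (hpgS_meas i)
      (hpgS_nonneg i) (hmapS i)
  have hpgT_int : Integrable pgT ν :=
    my_integrable_pushforward hg hpT_nonneg hpT_int hpgT_meas hpgT_nonneg hmapT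
  have hhg_meas : Measurable fun x => hhat (g x) := hhat_meas.comp hg
  have hhg_simplex : ∀ x, hhat (g x) ∈ stdSimplex ℝ (Fin C) :=
    fun x => hhat_simplex (g x)
  set Am : Fin C → ℝ := fun y => ∑ i, w i * ∫ x, hhat (g x) y * pS i x ∂μ with hAm
  set Mt : Fin C → ℝ := fun y => ∫ x, hhat (g x) y * pT x ∂μ with hMt
  -- triangle
  have A1 : Real.sqrt (2 * ∑ y, (Real.sqrt (a y) - Real.sqrt (b y)) ^ 2)
      ≤ Real.sqrt (2 * ∑ y, (Real.sqrt (a y) - Real.sqrt (Am y)) ^ 2)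
        + Real.sqrt (2 * ∑ y, (Real.sqrt (Am y) - Real.sqrt (Mt y)) ^ 2)
        + Real.sqrt (2 * ∑ y, (Real.sqrt (Mt y) - Real.sqrt (b y)) ^ 2) := by
    have t1 := my_hd_triangle a Am b
    have t2 := my_hd_triangle Am Mt b
    linarith
  -- Step A : source mixture loss
  have A2 : Real.sqrt (2 * ∑ y, (Real.sqrt (a y) - Real.sqrt (Am y)) ^ 2)
      ≤ Real.sqrt (∑ i, w i *
          ∫ x, (2 * ∑ c, (Real.sqrt (hhat (g x) c) - Real.sqrt (fS i x c)) ^ 2)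
            * pS i x ∂μ) := by
    refine Real.sqrt_le_sqrt ?_
    have hper : ∀ y, (Real.sqrt (a y) - Real.sqrt (Am y)) ^ 2
        ≤ ∑ i, w i * (Real.sqrt (∫ x, fS i x y * pS i x ∂μ)
            - Real.sqrt (∫ x, hhat (g x) y * pS i x ∂μ)) ^ 2 := by
      intro y
      rw [ha y]
      simp only [hAm]
      exact my_finite_convexity w (fun i => ∫ x, fS i x y * pS i x ∂μ)
        (fun i => ∫ x, hhat (g x) y * pS i x ∂μ) hw_nonneg
        (fun i => integral_nonneg fun x =>
          mul_nonneg ((hfS_simplex i x).1 y) (hpS_nonneg i x))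
        (fun i => integral_nonneg fun x =>
          mul_nonneg ((hhat_simplex (g x)).1 y) (hpS_nonneg i x))
    have hmb : ∀ i, 2 * ∑ y, (Real.sqrt (∫ x, hhat (g x) y * pS i x ∂μ)
        - Real.sqrt (∫ x, fS i x y * pS i x ∂μ)) ^ 2
        ≤ ∫ x, (2 * ∑ c, (Real.sqrt (hhat (g x) c) - Real.sqrt (fS i x c)) ^ 2)
            * pS i x ∂μ :=
      fun i => my_marginal_bound (hpS_meas i) (hpS_nonneg i) (hpS_int i)
        hhg_meas hhg_simplex (hfS_meas i) (hfS_simplex i)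
    calc 2 * ∑ y, (Real.sqrt (a y) - Real.sqrt (Am y)) ^ 2
        ≤ 2 * ∑ y, ∑ i, w i * (Real.sqrt (∫ x, fS i x y * pS i x ∂μ)
            - Real.sqrt (∫ x, hhat (g x) y * pS i x ∂μ)) ^ 2 := by
          have hss := Finset.sum_le_sum (fun y (_ : y ∈ Finset.univ) => hper y)
          linarith
      _ = ∑ i, w i * (2 * ∑ y, (Real.sqrt (∫ x, hhat (g x) y * pS i x ∂μ)
            - Real.sqrt (∫ x, fS i x y * pS i x ∂μ)) ^ 2) := by
          rw [Finset.sum_comm, Finset.mul_sum]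
          refine Finset.sum_congr rfl fun i _ => ?_
          have e : ∑ y, w i * (Real.sqrt (∫ x, fS i x y * pS i x ∂μ)
              - Real.sqrt (∫ x, hhat (g x) y * pS i x ∂μ)) ^ 2
              = w i * ∑ y, (Real.sqrt (∫ x, hhat (g x) y * pS i x ∂μ)
                - Real.sqrt (∫ x, fS i x y * pS i x ∂μ)) ^ 2 := by
            rw [Finset.mul_sum]
            exact Finset.sum_congr rfl fun y _ => by ring
          rw [e]
          ring
      _ ≤ ∑ i, w i * ∫ x, (2 * ∑ c, (Real.sqrt (hhat (g x) c)
            - Real.sqrt (fS i x c)) ^ 2) * pS i x ∂μ :=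
          Finset.sum_le_sum fun i _ =>
            mul_le_mul_of_nonneg_left (hmb i) (hw_nonneg i)
  -- Step C : target loss
  have A4 : Real.sqrt (2 * ∑ y, (Real.sqrt (Mt y) - Real.sqrt (b y)) ^ 2)
      ≤ Real.sqrt (∫ x, (2 * ∑ c, (Real.sqrt (hhat (g x) c)
          - Real.sqrt (fT x c)) ^ 2) * pT x ∂μ) := by
    refine Real.sqrt_le_sqrt ?_
    have h := my_marginal_bound hpT_meas hpT_nonneg hpT_int hhg_meas hhg_simplex
      hfT_meas hfT_simplex
    simpa only [hMt, hb] using h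
  -- Step B : latent comparison
  have A3 : Real.sqrt (2 * ∑ y, (Real.sqrt (Am y) - Real.sqrt (Mt y)) ^ 2)
      ≤ (∑ i, ∑ j, (Real.sqrt (w j) / (K : ℝ)) *
          Real.sqrt (2 * ∫ z, (Real.sqrt (pgS i z) - Real.sqrt (pgS j z)) ^ 2 ∂ν))
        + (∑ i, ∑ j, (Real.sqrt (w j) / (K : ℝ)) *
          Real.sqrt (2 * ∫ z, (Real.sqrt (pgT z) - Real.sqrt (pgS i z)) ^ 2 ∂ν)) := by
    have hNdef : ∀ i (y : Fin C), ∫ x, hhat (g x) y * pS i x ∂μ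
        = ∫ z, hhat z y * pgS i z ∂ν := fun i y =>
      my_integral_cov hg (hpS_meas i) (hpS_nonneg i) (hpgS_meas i) (hpgS_nonneg i)
        (hmapS i) ((measurable_pi_apply y).comp hhat_meas)
    have hNtdef : ∀ y : Fin C, Mt y = ∫ z, hhat z y * pgT z ∂ν := fun y => by
      rw [hMt]
      exact my_integral_cov hg hpT_meas hpT_nonneg hpgT_meas hpgT_nonneg hmapT
        ((measurable_pi_apply y).comp hhat_meas)
    have hper : ∀ y, (Real.sqrt (Am y) - Real.sqrt (Mt y)) ^ 2
        ≤ ∑ i, w i * (Real.sqrt (∫ z, hhat z y * pgS i z ∂ν)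
            - Real.sqrt (∫ z, hhat z y * pgT z ∂ν)) ^ 2 := by
      intro y
      have e1 : Am y = ∑ i, w i * ∫ z, hhat z y * pgS i z ∂ν := by
        simp only [hAm]
        exact Finset.sum_congr rfl fun i _ => by rw [hNdef i y]
      have e2 : Mt y = ∑ i, w i * ∫ z, hhat z y * pgT z ∂ν := by
        rw [hNtdef y, ← Finset.sum_mul, hw_sum, one_mul]
      rw [e1, e2]
      exact my_finite_convexity w (fun i => ∫ z, hhat z y * pgS i z ∂ν)
        (fun i => ∫ z, hhat z y * pgT z ∂ν) hw_nonneg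
        (fun i => integral_nonneg fun z =>
          mul_nonneg ((hhat_simplex z).1 y) (hpgS_nonneg i z))
        (fun i => integral_nonneg fun z =>
          mul_nonneg ((hhat_simplex z).1 y) (hpgT_nonneg z))
    have hlb : ∀ i, 2 * ∑ y, (Real.sqrt (∫ z, hhat z y * pgS i z ∂ν)
        - Real.sqrt (∫ z, hhat z y * pgT z ∂ν)) ^ 2
        ≤ (Real.sqrt (2 * ∫ z, (Real.sqrt (pgT z) - Real.sqrt (pgS i z)) ^ 2 ∂ν)) ^ 2 := by
      intro i
      have h := my_latent_bound (hpgS_meas i) hpgT_meas (hpgS_nonneg i) hpgT_nonneg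
        (hpgS_int i) hpgT_int hhat_meas hhat_simplex
      have e3 : ∫ z, (Real.sqrt (pgS i z) - Real.sqrt (pgT z)) ^ 2 ∂ν
          = ∫ z, (Real.sqrt (pgT z) - Real.sqrt (pgS i z)) ^ 2 ∂ν :=
        integral_congr_ae (Filter.Eventually.of_forall fun z => by ring)
      have e4 : (Real.sqrt (2 * ∫ z, (Real.sqrt (pgT z)
          - Real.sqrt (pgS i z)) ^ 2 ∂ν)) ^ 2
          = 2 * ∫ z, (Real.sqrt (pgT z) - Real.sqrt (pgS i z)) ^ 2 ∂ν :=
        Real.sq_sqrt (mul_nonneg (by norm_num)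
          (integral_nonneg fun z => sq_nonneg _))
      rw [e4, ← e3]
      exact h
    have hmid : 2 * ∑ y, (Real.sqrt (Am y) - Real.sqrt (Mt y)) ^ 2
        ≤ ∑ i, w i * (Real.sqrt (2 * ∫ z, (Real.sqrt (pgT z)
            - Real.sqrt (pgS i z)) ^ 2 ∂ν)) ^ 2 := by
      calc 2 * ∑ y, (Real.sqrt (Am y) - Real.sqrt (Mt y)) ^ 2
          ≤ 2 * ∑ y, ∑ i, w i * (Real.sqrt (∫ z, hhat z y * pgS i z ∂ν)
              - Real.sqrt (∫ z, hhat z y * pgT z ∂ν)) ^ 2 := by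
            have hss := Finset.sum_le_sum (fun y (_ : y ∈ Finset.univ) => hper y)
            linarith
        _ = ∑ i, w i * (2 * ∑ y, (Real.sqrt (∫ z, hhat z y * pgS i z ∂ν)
              - Real.sqrt (∫ z, hhat z y * pgT z ∂ν)) ^ 2) := by
            rw [Finset.sum_comm, Finset.mul_sum]
            refine Finset.sum_congr rfl fun i _ => ?_
            rw [← Finset.mul_sum]
            ring
        _ ≤ _ := Finset.sum_le_sum fun i _ =>
              mul_le_mul_of_nonneg_left (hlb i) (hw_nonneg i)
    have hstep : Real.sqrt (2 * ∑ y, (Real.sqrt (Am y) - Real.sqrt (Mt y)) ^ 2)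
        ≤ ∑ j, Real.sqrt (w j) *
            Real.sqrt (2 * ∫ z, (Real.sqrt (pgT z) - Real.sqrt (pgS j z)) ^ 2 ∂ν) := by
      calc Real.sqrt (2 * ∑ y, (Real.sqrt (Am y) - Real.sqrt (Mt y)) ^ 2)
          ≤ Real.sqrt (∑ i, w i * (Real.sqrt (2 * ∫ z, (Real.sqrt (pgT z)
              - Real.sqrt (pgS i z)) ^ 2 ∂ν)) ^ 2) := Real.sqrt_le_sqrt hmid
        _ ≤ ∑ i, Real.sqrt (w i * (Real.sqrt (2 * ∫ z, (Real.sqrt (pgT z)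
              - Real.sqrt (pgS i z)) ^ 2 ∂ν)) ^ 2) :=
            my_sqrt_sum_le _ (fun i => mul_nonneg (hw_nonneg i) (sq_nonneg _))
        _ = ∑ j, Real.sqrt (w j) *
              Real.sqrt (2 * ∫ z, (Real.sqrt (pgT z) - Real.sqrt (pgS j z)) ^ 2 ∂ν) :=
            Finset.sum_congr rfl fun i _ => by
              rw [Real.sqrt_mul (hw_nonneg i), Real.sqrt_sq (Real.sqrt_nonneg _)]
    refine hstep.trans ?_
    have hKpos : (0:ℝ) < (K:ℝ) := by exact_mod_cast hK
    have htri : ∀ j, Real.sqrt (2 * ∫ z, (Real.sqrt (pgT z)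
        - Real.sqrt (pgS j z)) ^ 2 ∂ν)
        ≤ (1/(K:ℝ)) * ∑ i, (Real.sqrt (2 * ∫ z, (Real.sqrt (pgS i z)
            - Real.sqrt (pgS j z)) ^ 2 ∂ν)
          + Real.sqrt (2 * ∫ z, (Real.sqrt (pgT z) - Real.sqrt (pgS i z)) ^ 2 ∂ν)) := by
      intro j
      have h1 : ∀ i : Fin K, Real.sqrt (2 * ∫ z, (Real.sqrt (pgT z)
          - Real.sqrt (pgS j z)) ^ 2 ∂ν)
          ≤ Real.sqrt (2 * ∫ z, (Real.sqrt (pgS i z) - Real.sqrt (pgS j z)) ^ 2 ∂ν)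
            + Real.sqrt (2 * ∫ z, (Real.sqrt (pgT z) - Real.sqrt (pgS i z)) ^ 2 ∂ν) := by
        intro i
        have h := my_latent_triangle hpgT_meas (hpgS_meas i) (hpgS_meas j)
          hpgT_nonneg (hpgS_nonneg i) (hpgS_nonneg j) hpgT_int (hpgS_int i)
          (hpgS_int j)
        linarith
      have h2 := Finset.sum_le_sum (fun i (_ : i ∈ Finset.univ) => h1 i)
      rw [Finset.sum_const, Finset.card_univ, Fintype.card_fin, nsmul_eq_mul] at h2
      have e5 : Real.sqrt (2 * ∫ z, (Real.sqrt (pgT z) - Real.sqrt (pgS j z)) ^ 2 ∂ν)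
          = (1/(K:ℝ)) * ((K:ℝ) * Real.sqrt (2 * ∫ z, (Real.sqrt (pgT z)
            - Real.sqrt (pgS j z)) ^ 2 ∂ν)) := by
        field_simp
      rw [e5]
      exact mul_le_mul_of_nonneg_left h2 (by positivity)
    calc ∑ j, Real.sqrt (w j) *
          Real.sqrt (2 * ∫ z, (Real.sqrt (pgT z) - Real.sqrt (pgS j z)) ^ 2 ∂ν)
        ≤ ∑ j, Real.sqrt (w j) * ((1/(K:ℝ)) * ∑ i,
            (Real.sqrt (2 * ∫ z, (Real.sqrt (pgS i z) - Real.sqrt (pgS j z)) ^ 2 ∂ν)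
            + Real.sqrt (2 * ∫ z, (Real.sqrt (pgT z)
                - Real.sqrt (pgS i z)) ^ 2 ∂ν))) :=
          Finset.sum_le_sum fun j _ =>
            mul_le_mul_of_nonneg_left (htri j) (Real.sqrt_nonneg _)
      _ = ∑ j, ∑ i, ((Real.sqrt (w j) / (K : ℝ)) *
            Real.sqrt (2 * ∫ z, (Real.sqrt (pgS i z) - Real.sqrt (pgS j z)) ^ 2 ∂ν)
          + (Real.sqrt (w j) / (K : ℝ)) *
            Real.sqrt (2 * ∫ z, (Real.sqrt (pgT z) - Real.sqrt (pgS i z)) ^ 2 ∂ν)) := by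
          refine Finset.sum_congr rfl fun j _ => ?_
          rw [Finset.mul_sum, Finset.mul_sum]
          exact Finset.sum_congr rfl fun i _ => by ring
      _ = ∑ i, ∑ j, ((Real.sqrt (w j) / (K : ℝ)) *
            Real.sqrt (2 * ∫ z, (Real.sqrt (pgS i z) - Real.sqrt (pgS j z)) ^ 2 ∂ν)
          + (Real.sqrt (w j) / (K : ℝ)) *
            Real.sqrt (2 * ∫ z, (Real.sqrt (pgT z) - Real.sqrt (pgS i z)) ^ 2 ∂ν)) := by
          rw [Finset.sum_comm]
      _ = _ := by
          rw [← Finset.sum_add_distrib]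
          exact Finset.sum_congr rfl fun i _ => Finset.sum_add_distrib
  linarith [A1, A2, A3, A4]
end

section
/- Let P be a probability measure on a measurable space X, g : X → Z measurable into a measurable space Z, ĥ : Z → Y_Δ measurable, and f : X → Y_Δ measurable. Let h : Z → Y_Δ be measurable such that for each i ∈ [C], the map z ↦ h(z, i) composed with g is a version of the conditional expectation E_P[ f(·, i) | σ(g) ]. Then the expected loss computed on the feature space equals the expected loss computed on the input space: ∫_Z ℓ(ĥ(z), h(z)) d(g_#P)(z) = ∫_X ℓ(ĥ(g(x)), f(x)) dP(x). -/
open MeasureTheory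

/-- **Corollary 10.** If `h : Z → Y_Δ` is the labeling function induced on the
feature space (each coordinate `h(·,i) ∘ g` a version of `E_P[f(·,i) | σ(g)]`), then
the expected loss on the feature space equals the expected loss on the input space:
`∫ ℓ(ĥ(z), h(z)) d(g_#P) = ∫ ℓ(ĥ(g(x)), f(x)) dP` where `ℓ(u,v) = Σ_i l(u,i) v_i`. -/
theorem feature_loss_eq_input_loss
    {X Z : Type*} [MeasurableSpace X] [MeasurableSpace Z]
    (P : Measure X) [IsProbabilityMeasure P]
    (C : ℕ) (hC : 0 < C)
    (L : ℝ) (hL : 0 ≤ L)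
    (l : (Fin C → ℝ) → Fin C → ℝ)
    (hl_meas : ∀ i, Measurable fun β => l β i)
    (hl_bounds : ∀ β ∈ stdSimplex ℝ (Fin C), ∀ i, 0 ≤ l β i ∧ l β i ≤ L)
    (g : X → Z) (hg : Measurable g)
    (hhat : Z → Fin C → ℝ) (hhat_meas : Measurable hhat)
    (hhat_simplex : ∀ z, hhat z ∈ stdSimplex ℝ (Fin C))
    (f : X → Fin C → ℝ) (hf_meas : Measurable f)
    (hf_simplex : ∀ x, f x ∈ stdSimplex ℝ (Fin C))
    (h : Z → Fin C → ℝ) (hh_meas : Measurable h)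
    (hh_simplex : ∀ z, h z ∈ stdSimplex ℝ (Fin C))
    (hh_condexp : ∀ i : Fin C, (fun x => h (g x) i)
      =ᵐ[P] P[(fun x => f x i) | MeasurableSpace.comap g inferInstance]) :
    ∫ z, (∑ i, l (hhat z) i * h z i) ∂(Measure.map g P)
      = ∫ x, (∑ i, l (hhat (g x)) i * f x i) ∂P := by
  have hm : MeasurableSpace.comap g inferInstance ≤ ‹MeasurableSpace X› := hg.comap_le
  haveI : SigmaFinite (P.trim hm) := by infer_instance
  -- bounds
  have hφ_bd : ∀ (z : Z) (i : Fin C), |l (hhat z) i| ≤ L := fun z i => by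
    have := hl_bounds _ (hhat_simplex z) i
    rw [abs_le]; constructor <;> linarith
  have simplex_bd : ∀ (v : Fin C → ℝ), v ∈ stdSimplex ℝ (Fin C) → ∀ i, |v i| ≤ 1 := by
    intro v hv i
    have h0 := hv.1 i
    have h1 : v i ≤ 1 := by
      calc v i ≤ ∑ j, v j :=
        Finset.single_le_sum (fun j _ => hv.1 j) (Finset.mem_univ i)
      _ = 1 := hv.2
    rw [abs_le]; constructor <;> linarith
  have hgm : Measurable[MeasurableSpace.comap g inferInstance] g := Measurable.of_comap_le le_rfl
  have key : ∀ i : Fin C,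
      ∫ x, l (hhat (g x)) i * h (g x) i ∂P = ∫ x, l (hhat (g x)) i * f x i ∂P := by
    intro i
    have hφm : Measurable[MeasurableSpace.comap g inferInstance] (fun x => l (hhat (g x)) i) :=
      ((hl_meas i).comp hhat_meas).comp hgm
    have hφm0 : Measurable (fun x => l (hhat (g x)) i) := hφm.mono hm le_rfl
    have hfi_meas : Measurable (fun x => f x i) := (measurable_pi_apply i).comp hf_meas
    have hfi_int : Integrable (fun x => f x i) P :=
      ⟨hfi_meas.aestronglyMeasurable,
        HasFiniteIntegral.of_bounded (C := 1) (ae_of_all _ fun x => by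
          simpa using simplex_bd _ (hf_simplex x) i)⟩
    have hφf_int : Integrable ((fun x => l (hhat (g x)) i) * fun x => f x i) P := by
      refine ⟨(hφm0.mul hfi_meas).aestronglyMeasurable,
        HasFiniteIntegral.of_bounded (C := L * 1) (ae_of_all _ fun x => ?_)⟩
      simp only [Pi.mul_apply, Real.norm_eq_abs, abs_mul]
      exact mul_le_mul (hφ_bd _ _) (simplex_bd _ (hf_simplex x) i) (abs_nonneg _) hL
    have hmul := condExp_mul_of_stronglyMeasurable_left (μ := P) (m := MeasurableSpace.comap g inferInstance)
      hφm.stronglyMeasurable hφf_int hfi_int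
    calc ∫ x, l (hhat (g x)) i * h (g x) i ∂P
        = ∫ x, l (hhat (g x)) i * (P[(fun x => f x i) | MeasurableSpace.comap g inferInstance]) x ∂P := by
          refine integral_congr_ae ?_
          filter_upwards [hh_condexp i] with x hx
          rw [hx]
      _ = ∫ x, (P[(fun x => l (hhat (g x)) i) * (fun x => f x i) | MeasurableSpace.comap g inferInstance]) x ∂P := by
          refine integral_congr_ae ?_
          filter_upwards [hmul] with x hx
          rw [hx]; rfl
      _ = ∫ x, l (hhat (g x)) i * f x i ∂P := integral_condExp hm
  have hmeas_sum : Measurable (fun z => ∑ i, l (hhat z) i * h z i) := by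
    refine Finset.measurable_sum _ fun i _ => ?_
    exact ((hl_meas i).comp hhat_meas).mul ((measurable_pi_apply i).comp hh_meas)
  rw [integral_map hg.aemeasurable hmeas_sum.aestronglyMeasurable]
  have hint1 : ∀ i : Fin C, Integrable (fun x => l (hhat (g x)) i * h (g x) i) P := by
    intro i
    refine ⟨((((hl_meas i).comp hhat_meas).comp hg).mul
      (((measurable_pi_apply i).comp hh_meas).comp hg)).aestronglyMeasurable,
      HasFiniteIntegral.of_bounded (C := L * 1) (ae_of_all _ fun x => ?_)⟩
    simp only [Real.norm_eq_abs, abs_mul]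
    exact mul_le_mul (hφ_bd _ _) (simplex_bd _ (hh_simplex (g x)) i) (abs_nonneg _) hL
  have hint2 : ∀ i : Fin C, Integrable (fun x => l (hhat (g x)) i * f x i) P := by
    intro i
    refine ⟨((((hl_meas i).comp hhat_meas).comp hg).mul
      ((measurable_pi_apply i).comp hf_meas)).aestronglyMeasurable,
      HasFiniteIntegral.of_bounded (C := L * 1) (ae_of_all _ fun x => ?_)⟩
    simp only [Real.norm_eq_abs, abs_mul]
    exact mul_le_mul (hφ_bd _ _) (simplex_bd _ (hf_simplex x) i) (abs_nonneg _) hL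
  rw [integral_finset_sum _ fun i _ => hint1 i, integral_finset_sum _ fun i _ => hint2 i]
  exact Finset.sum_congr rfl fun i _ => key i
end

section
/- Let p^T and p^{S,1}, …, p^{S,K} be probability densities w.r.t. a σ-finite measure ν on Z, and let π = (π_1,…,π_K) be a probability vector. Then the Hellinger distance between the target distribution and the source mixture Σ_{j=1}^K π_j P^{S,j} satisfies d_{1/2}( P^T, Σ_{j=1}^K π_j P^{S,j} ) ≤ Σ_{j=1}^K √(π_j) · d_{1/2}( P^T, P^{S,j} ). -/
open MeasureTheory

lemma sqrt_add_le_aux {x y : ℝ} (hx : 0 ≤ x) (hy : 0 ≤ y) :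
    Real.sqrt (x + y) ≤ Real.sqrt x + Real.sqrt y := by
  rw [show x + y = x + y from rfl]
  have h : x + y ≤ (Real.sqrt x + Real.sqrt y) ^ 2 := by
    have := Real.sq_sqrt hx
    have := Real.sq_sqrt hy
    have h2 : 0 ≤ Real.sqrt x * Real.sqrt y := by positivity
    nlinarith
  calc Real.sqrt (x + y) ≤ Real.sqrt ((Real.sqrt x + Real.sqrt y) ^ 2) :=
        Real.sqrt_le_sqrt h
    _ = Real.sqrt x + Real.sqrt y := by
        rw [Real.sqrt_sq (by positivity)]

lemma sqrt_sum_le_sum_sqrt {ι : Type*} (s : Finset ι) (f : ι → ℝ) (hf : ∀ i ∈ s, 0 ≤ f i) :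
    Real.sqrt (∑ i ∈ s, f i) ≤ ∑ i ∈ s, Real.sqrt (f i) := by
  induction s using Finset.cons_induction with
  | empty => simp
  | cons a s ha ih =>
    rw [Finset.sum_cons, Finset.sum_cons]
    calc Real.sqrt (f a + ∑ i ∈ s, f i)
        ≤ Real.sqrt (f a) + Real.sqrt (∑ i ∈ s, f i) :=
          sqrt_add_le_aux (hf a (Finset.mem_cons_self _ _))
            (Finset.sum_nonneg fun i hi => hf i (Finset.mem_cons_of_mem hi))
      _ ≤ Real.sqrt (f a) + ∑ i ∈ s, Real.sqrt (f i) := by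
          gcongr
          exact ih fun i hi => hf i (Finset.mem_cons_of_mem hi)

/-- **Lemma 11 (mixture distance decomposition).** The Hellinger distance between
the target distribution and the source mixture is bounded by the `√π_j`-weighted sum
of Hellinger distances between the target and the individual source distributions. -/
theorem hellinger_mixture_decomposition
    {Z : Type*} [MeasurableSpace Z] (ν : Measure Z) [SigmaFinite ν]
    (K : ℕ) (hK : 0 < K)
    (w : Fin K → ℝ) (hw_nonneg : ∀ j, 0 ≤ w j) (hw_sum : ∑ j, w j = 1)
    (pT : Z → ℝ) (pS : Fin K → Z → ℝ)
    (hpT_meas : Measurable pT) (hpT_nonneg : ∀ z, 0 ≤ pT z)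
    (hpT_prob : ∫ z, pT z ∂ν = 1)
    (hpS_meas : ∀ j, Measurable (pS j)) (hpS_nonneg : ∀ j z, 0 ≤ pS j z)
    (hpS_prob : ∀ j, ∫ z, pS j z ∂ν = 1) :
    Real.sqrt (2 * ∫ z, (Real.sqrt (pT z) - Real.sqrt (∑ j, w j * pS j z)) ^ 2 ∂ν)
      ≤ ∑ j, Real.sqrt (w j) *
          Real.sqrt (2 * ∫ z, (Real.sqrt (pT z) - Real.sqrt (pS j z)) ^ 2 ∂ν) := by
  -- Integrability of the densities
  have hpT_int : Integrable pT ν := by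
    by_contra h
    rw [integral_undef h] at hpT_prob
    norm_num at hpT_prob
  have hpS_int : ∀ j, Integrable (pS j) ν := by
    intro j
    by_contra h
    have := hpS_prob j
    rw [integral_undef h] at this
    norm_num at this
  -- Integrability of the Hellinger integrands
  have hell_int : ∀ (q : Z → ℝ), Measurable q → (∀ z, 0 ≤ q z) → Integrable q ν →
      Integrable (fun z => (Real.sqrt (pT z) - Real.sqrt (q z)) ^ 2) ν := by
    intro q hqm hqn hqi
    apply Integrable.mono' ((hpT_int.const_mul 2).add (hqi.const_mul 2))
    · exact ((hpT_meas.sqrt.sub hqm.sqrt).pow_const 2).aestronglyMeasurable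
    · filter_upwards with z
      rw [Real.norm_of_nonneg (by positivity)]
      show (Real.sqrt (pT z) - Real.sqrt (q z)) ^ 2 ≤ 2 * pT z + 2 * q z
      have h1 : Real.sqrt (pT z) ^ 2 = pT z := Real.sq_sqrt (hpT_nonneg z)
      have h2 : Real.sqrt (q z) ^ 2 = q z := Real.sq_sqrt (hqn z)
      nlinarith [Real.sqrt_nonneg (pT z), Real.sqrt_nonneg (q z),
        sq_nonneg (Real.sqrt (pT z) + Real.sqrt (q z))]
  have hmix_meas : Measurable (fun z => ∑ j, w j * pS j z) :=
    Finset.measurable_sum _ fun j _ => (hpS_meas j).const_mul _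
  have hmix_nonneg : ∀ z, 0 ≤ ∑ j, w j * pS j z := fun z =>
    Finset.sum_nonneg fun j _ => mul_nonneg (hw_nonneg j) (hpS_nonneg j z)
  have hmix_int : Integrable (fun z => ∑ j, w j * pS j z) ν :=
    integrable_finset_sum _ fun j _ => (hpS_int j).const_mul _
  have hH : Integrable (fun z => (Real.sqrt (pT z) - Real.sqrt (∑ j, w j * pS j z)) ^ 2) ν :=
    hell_int _ hmix_meas hmix_nonneg hmix_int
  have hHj : ∀ j, Integrable (fun z => (Real.sqrt (pT z) - Real.sqrt (pS j z)) ^ 2) ν :=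
    fun j => hell_int _ (hpS_meas j) (hpS_nonneg j) (hpS_int j)
  -- Pointwise joint-convexity inequality
  have hpt : ∀ z, (Real.sqrt (pT z) - Real.sqrt (∑ j, w j * pS j z)) ^ 2
      ≤ ∑ j, w j * (Real.sqrt (pT z) - Real.sqrt (pS j z)) ^ 2 := by
    intro z
    have hjensen : ∑ j, w j * Real.sqrt (pS j z) ≤ Real.sqrt (∑ j, w j * pS j z) := by
      have := Real.sum_sqrt_mul_sqrt_le (Finset.univ : Finset (Fin K))
        (f := w) (g := fun j => w j * pS j z) hw_nonneg
        (fun j => mul_nonneg (hw_nonneg j) (hpS_nonneg j z))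
      rw [hw_sum, Real.sqrt_one, one_mul] at this
      refine le_trans (le_of_eq ?_) this
      refine Finset.sum_congr rfl fun j _ => ?_
      rw [Real.sqrt_mul (hw_nonneg j), ← mul_assoc, Real.mul_self_sqrt (hw_nonneg j)]
    have hexp : ∑ j, w j * (Real.sqrt (pT z) - Real.sqrt (pS j z)) ^ 2
        = pT z + (∑ j, w j * pS j z)
          - 2 * Real.sqrt (pT z) * (∑ j, w j * Real.sqrt (pS j z)) := by
      have : ∀ j : Fin K, w j * (Real.sqrt (pT z) - Real.sqrt (pS j z)) ^ 2
          = w j * pT z + w j * pS j z - 2 * Real.sqrt (pT z) * (w j * Real.sqrt (pS j z)) := by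
        intro j
        have h1 : Real.sqrt (pT z) ^ 2 = pT z := Real.sq_sqrt (hpT_nonneg z)
        have h2 : Real.sqrt (pS j z) ^ 2 = pS j z := Real.sq_sqrt (hpS_nonneg j z)
        rw [sub_sq, h1, h2]; ring
      rw [Finset.sum_congr rfl fun j _ => this j, Finset.sum_sub_distrib,
        Finset.sum_add_distrib, ← Finset.sum_mul, hw_sum, one_mul, ← Finset.mul_sum]
    rw [hexp]
    have h1 : Real.sqrt (pT z) ^ 2 = pT z := Real.sq_sqrt (hpT_nonneg z)
    have h2 : Real.sqrt (∑ j, w j * pS j z) ^ 2 = ∑ j, w j * pS j z :=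
      Real.sq_sqrt (hmix_nonneg z)
    nlinarith [Real.sqrt_nonneg (pT z), hjensen]
  -- Integrate the pointwise inequality
  have hint : (∫ z, (Real.sqrt (pT z) - Real.sqrt (∑ j, w j * pS j z)) ^ 2 ∂ν)
      ≤ ∑ j, w j * ∫ z, (Real.sqrt (pT z) - Real.sqrt (pS j z)) ^ 2 ∂ν := by
    have : (∫ z, (Real.sqrt (pT z) - Real.sqrt (∑ j, w j * pS j z)) ^ 2 ∂ν)
        ≤ ∫ z, ∑ j, w j * (Real.sqrt (pT z) - Real.sqrt (pS j z)) ^ 2 ∂ν :=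
      integral_mono hH (integrable_finset_sum _ fun j _ => (hHj j).const_mul _) hpt
    rwa [integral_finset_sum _ (fun j _ => (hHj j).const_mul _),
      Finset.sum_congr rfl fun j _ => integral_const_mul _ _] at this
  -- Conclude using √(Σ xⱼ) ≤ Σ √xⱼ
  have hIj_nonneg : ∀ j : Fin K, 0 ≤ ∫ z, (Real.sqrt (pT z) - Real.sqrt (pS j z)) ^ 2 ∂ν :=
    fun j => integral_nonneg fun z => by positivity
  calc Real.sqrt (2 * ∫ z, (Real.sqrt (pT z) - Real.sqrt (∑ j, w j * pS j z)) ^ 2 ∂ν)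
      ≤ Real.sqrt (∑ j, 2 * (w j * ∫ z, (Real.sqrt (pT z) - Real.sqrt (pS j z)) ^ 2 ∂ν)) := by
        apply Real.sqrt_le_sqrt
        rw [← Finset.mul_sum]
        linarith
    _ ≤ ∑ j, Real.sqrt (2 * (w j * ∫ z, (Real.sqrt (pT z) - Real.sqrt (pS j z)) ^ 2 ∂ν)) :=
        sqrt_sum_le_sum_sqrt _ _ fun j _ =>
          mul_nonneg (by norm_num) (mul_nonneg (hw_nonneg j) (hIj_nonneg j))
    _ = ∑ j, Real.sqrt (w j) *
          Real.sqrt (2 * ∫ z, (Real.sqrt (pT z) - Real.sqrt (pS j z)) ^ 2 ∂ν) := by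
        refine Finset.sum_congr rfl fun j _ => ?_
        rw [show (2 : ℝ) * (w j * ∫ z, (Real.sqrt (pT z) - Real.sqrt (pS j z)) ^ 2 ∂ν)
            = w j * (2 * ∫ z, (Real.sqrt (pT z) - Real.sqrt (pS j z)) ^ 2 ∂ν) by ring,
          Real.sqrt_mul (hw_nonneg j)]
end

section
/- Let P be a probability measure on X with density p w.r.t. a σ-finite measure μ, and let f, f̂ : X → Y_Δ be measurable labeling functions. Define the induced label marginals a, b ∈ Y_Δ by a_i = ∫ f(x, i) p(x) dμ(x) and b_i = ∫ f̂(x, i) p(x) dμ(x). Then d_{1/2}(a, b) ≤ L(f̂, f, P)^{1/2}, where the loss is the Hellinger loss; explicitly, 2 Σ_{i=1}^C ( √(∫ f(x,i) p dμ) − √(∫ f̂(x,i) p dμ) )² ≤ ∫ 2 Σ_{i=1}^C ( √(f(x,i)) − √(f̂(x,i)) )² p(x) dμ(x). -/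
open MeasureTheory

/-- Cauchy–Schwarz for nonnegative real-valued integrals. -/
lemma integral_mul_le_sqrt_mul_sqrt' {X : Type*} [MeasurableSpace X] (μ : Measure X)
    (g h : X → ℝ) (hg : ∀ x, 0 ≤ g x) (hh : ∀ x, 0 ≤ h x)
    (hg2 : Integrable (fun x => g x ^ 2) μ) (hh2 : Integrable (fun x => h x ^ 2) μ)
    (hgh : Integrable (fun x => g x * h x) μ) :
    ∫ x, g x * h x ∂μ ≤ Real.sqrt (∫ x, g x ^ 2 ∂μ) * Real.sqrt (∫ x, h x ^ 2 ∂μ) := by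
  set A := ∫ x, g x ^ 2 ∂μ with hA
  set B := ∫ x, h x ^ 2 ∂μ with hB
  have hA0 : 0 ≤ A := integral_nonneg fun x => sq_nonneg _
  have hB0 : 0 ≤ B := integral_nonneg fun x => sq_nonneg _
  rcases eq_or_lt_of_le hA0 with hAz | hApos
  · -- A = 0 : g = 0 a.e., so ∫ g h = 0
    have hgz : (fun x => g x ^ 2) =ᵐ[μ] 0 :=
      (integral_eq_zero_iff_of_nonneg (fun x => sq_nonneg _) hg2).mp hAz.symm
    have : (fun x => g x * h x) =ᵐ[μ] 0 := by
      filter_upwards [hgz] with x hx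
      have : g x = 0 := by
        have := pow_eq_zero_iff (n := 2) (by norm_num) |>.mp hx
        exact this
      simp [this]
    rw [integral_congr_ae this]
    simp
    positivity
  rcases eq_or_lt_of_le hB0 with hBz | hBpos
  · have hhz : (fun x => h x ^ 2) =ᵐ[μ] 0 :=
      (integral_eq_zero_iff_of_nonneg (fun x => sq_nonneg _) hh2).mp hBz.symm
    have : (fun x => g x * h x) =ᵐ[μ] 0 := by
      filter_upwards [hhz] with x hx
      have : h x = 0 := pow_eq_zero_iff (n := 2) (by norm_num) |>.mp hx
      simp [this]
    rw [integral_congr_ae this]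
    simp
    positivity
  -- main case
  set sA := Real.sqrt A with hsA
  set sB := Real.sqrt B with hsB
  have hsApos : 0 < sA := Real.sqrt_pos.mpr hApos
  have hsBpos : 0 < sB := Real.sqrt_pos.mpr hBpos
  set t : ℝ := sB / sA with ht
  have htpos : 0 < t := div_pos hsBpos hsApos
  have key : ∫ x, g x * h x ∂μ ≤ ∫ x, (t * g x ^ 2 + h x ^ 2 / t) / 2 ∂μ := by
    refine integral_mono hgh ?_ ?_
    · exact (((hg2.const_mul t).add (hh2.div_const t)).div_const 2)
    · intro x
      show g x * h x ≤ (t * g x ^ 2 + h x ^ 2 / t) / 2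
      have heq : (t * g x ^ 2 + h x ^ 2 / t) / 2 - g x * h x
          = (t * g x - h x) ^ 2 / (2 * t) := by
        field_simp
        ring
      have hpos : 0 ≤ (t * g x - h x) ^ 2 / (2 * t) := by positivity
      linarith
  have hval : ∫ x, (t * g x ^ 2 + h x ^ 2 / t) / 2 ∂μ = (t * A + B / t) / 2 := by
    rw [integral_div, integral_add (hg2.const_mul t) (hh2.div_const t),
      integral_const_mul, integral_div]
  have hAeq : A = sA ^ 2 := (Real.sq_sqrt hA0).symm
  have hBeq : B = sB ^ 2 := (Real.sq_sqrt hB0).symm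
  have hfin : (t * A + B / t) / 2 = sA * sB := by
    rw [ht, hAeq, hBeq]
    field_simp
    ring
  calc ∫ x, g x * h x ∂μ ≤ (t * A + B / t) / 2 := hval ▸ key
    _ = sA * sB := hfin

/-- **Lemma 12 (Hellinger loss bound).** The Hellinger distance between the label
marginals induced by `f` and `f̂` on `P` is at most the square root of the general
loss with Hellinger loss `ℓ`; explicitly,
`2 Σ_i (√(∫ f(x,i) p dμ) − √(∫ f̂(x,i) p dμ))² ≤ ∫ 2 Σ_i (√f(x,i) − √f̂(x,i))² p dμ`. -/
theorem label_marginal_hellinger_le_loss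
    {X : Type*} [MeasurableSpace X]
    (μ : Measure X) [SigmaFinite μ]
    (C : ℕ) (hC : 0 < C)
    (p : X → ℝ) (hp_meas : Measurable p) (hp_nonneg : ∀ x, 0 ≤ p x)
    (hp_prob : ∫ x, p x ∂μ = 1)
    (f fhat : X → Fin C → ℝ)
    (hf_meas : Measurable f) (hfhat_meas : Measurable fhat)
    (hf_simplex : ∀ x, f x ∈ stdSimplex ℝ (Fin C))
    (hfhat_simplex : ∀ x, fhat x ∈ stdSimplex ℝ (Fin C))
    (a b : Fin C → ℝ)
    (ha : ∀ i, a i = ∫ x, f x i * p x ∂μ)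
    (hb : ∀ i, b i = ∫ x, fhat x i * p x ∂μ) :
    Real.sqrt (2 * ∑ i, (Real.sqrt (a i) - Real.sqrt (b i)) ^ 2)
      ≤ Real.sqrt (∫ x,
          (2 * ∑ i, (Real.sqrt (fhat x i) - Real.sqrt (f x i)) ^ 2) * p x ∂μ)
    ∧ 2 * ∑ i, (Real.sqrt (∫ x, f x i * p x ∂μ)
          - Real.sqrt (∫ x, fhat x i * p x ∂μ)) ^ 2
        ≤ ∫ x, (2 * ∑ i, (Real.sqrt (f x i) - Real.sqrt (fhat x i)) ^ 2) * p x ∂μ := by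
  -- basic facts
  have hpI : Integrable p μ := by
    by_contra hcon
    rw [integral_undef hcon] at hp_prob
    norm_num at hp_prob
  have hf0 : ∀ x i, 0 ≤ f x i := fun x i => (hf_simplex x).1 i
  have hfhat0 : ∀ x i, 0 ≤ fhat x i := fun x i => (hfhat_simplex x).1 i
  have hf1 : ∀ x i, f x i ≤ 1 := by
    intro x i
    have := (hf_simplex x).2
    calc f x i ≤ ∑ j, f x j :=
          Finset.single_le_sum (fun j _ => hf0 x j) (Finset.mem_univ i)
      _ = 1 := this
  have hfhat1 : ∀ x i, fhat x i ≤ 1 := by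
    intro x i
    have := (hfhat_simplex x).2
    calc fhat x i ≤ ∑ j, fhat x j :=
          Finset.single_le_sum (fun j _ => hfhat0 x j) (Finset.mem_univ i)
      _ = 1 := this
  have hf_meas' : ∀ i, Measurable (fun x => f x i) :=
    fun i => (measurable_pi_apply i).comp hf_meas
  have hfhat_meas' : ∀ i, Measurable (fun x => fhat x i) :=
    fun i => (measurable_pi_apply i).comp hfhat_meas
  -- integrabilities
  have hIf : ∀ i, Integrable (fun x => f x i * p x) μ := by
    intro i
    refine hpI.mono' ((hf_meas' i).mul hp_meas).aestronglyMeasurable ?_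
    filter_upwards with x
    rw [Real.norm_eq_abs, abs_of_nonneg (mul_nonneg (hf0 x i) (hp_nonneg x))]
    nlinarith [hp_nonneg x, hf0 x i, hf1 x i]
  have hIfhat : ∀ i, Integrable (fun x => fhat x i * p x) μ := by
    intro i
    refine hpI.mono' ((hfhat_meas' i).mul hp_meas).aestronglyMeasurable ?_
    filter_upwards with x
    rw [Real.norm_eq_abs, abs_of_nonneg (mul_nonneg (hfhat0 x i) (hp_nonneg x))]
    nlinarith [hp_nonneg x, hfhat0 x i, hfhat1 x i]
  have hIcross : ∀ i, Integrable
      (fun x => (Real.sqrt (f x i) * Real.sqrt (p x)) *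
        (Real.sqrt (fhat x i) * Real.sqrt (p x))) μ := by
    intro i
    refine hpI.mono' ?_ ?_
    · exact ((((hf_meas' i).sqrt.mul hp_meas.sqrt).mul
        ((hfhat_meas' i).sqrt.mul hp_meas.sqrt))).aestronglyMeasurable
    · filter_upwards with x
      have h1 : Real.sqrt (f x i) ≤ 1 := by
        rw [show (1:ℝ) = Real.sqrt 1 by simp]
        exact Real.sqrt_le_sqrt (hf1 x i)
      have h2 : Real.sqrt (fhat x i) ≤ 1 := by
        rw [show (1:ℝ) = Real.sqrt 1 by simp]
        exact Real.sqrt_le_sqrt (hfhat1 x i)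
      have hsp : Real.sqrt (p x) * Real.sqrt (p x) = p x :=
        Real.mul_self_sqrt (hp_nonneg x)
      rw [Real.norm_eq_abs, abs_of_nonneg (by positivity)]
      calc Real.sqrt (f x i) * Real.sqrt (p x) *
            (Real.sqrt (fhat x i) * Real.sqrt (p x))
          = (Real.sqrt (f x i) * Real.sqrt (fhat x i)) *
            (Real.sqrt (p x) * Real.sqrt (p x)) := by ring
        _ ≤ 1 * p x := by
            rw [hsp]
            exact mul_le_mul_of_nonneg_right
              (mul_le_one₀ h1 (Real.sqrt_nonneg _) h2) (hp_nonneg x)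
        _ = p x := one_mul _
  -- the per-coordinate squared-sqrt expansion
  have hsq_expand : ∀ i x,
      (Real.sqrt (f x i) - Real.sqrt (fhat x i)) ^ 2 * p x
        = f x i * p x + fhat x i * p x
          - 2 * ((Real.sqrt (f x i) * Real.sqrt (p x)) *
              (Real.sqrt (fhat x i) * Real.sqrt (p x))) := by
    intro i x
    have h1 : Real.sqrt (f x i) ^ 2 = f x i := Real.sq_sqrt (hf0 x i)
    have h2 : Real.sqrt (fhat x i) ^ 2 = fhat x i := Real.sq_sqrt (hfhat0 x i)
    have hsp : Real.sqrt (p x) * Real.sqrt (p x) = p x :=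
      Real.mul_self_sqrt (hp_nonneg x)
    nlinarith [h1, h2, hsp]
  have hIterm : ∀ i, Integrable
      (fun x => (Real.sqrt (f x i) - Real.sqrt (fhat x i)) ^ 2 * p x) μ := by
    intro i
    have : (fun x => (Real.sqrt (f x i) - Real.sqrt (fhat x i)) ^ 2 * p x)
        = fun x => f x i * p x + fhat x i * p x
          - 2 * ((Real.sqrt (f x i) * Real.sqrt (p x)) *
              (Real.sqrt (fhat x i) * Real.sqrt (p x))) := by
      funext x; exact hsq_expand i x
    rw [this]
    exact ((hIf i).add (hIfhat i)).sub ((hIcross i).const_mul 2)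
  -- per-coordinate key inequality
  have hkey : ∀ i, (Real.sqrt (a i) - Real.sqrt (b i)) ^ 2
      ≤ ∫ x, (Real.sqrt (f x i) - Real.sqrt (fhat x i)) ^ 2 * p x ∂μ := by
    intro i
    set g : X → ℝ := fun x => Real.sqrt (f x i) * Real.sqrt (p x) with hg
    set h : X → ℝ := fun x => Real.sqrt (fhat x i) * Real.sqrt (p x) with hh
    have hg2 : ∀ x, g x ^ 2 = f x i * p x := by
      intro x
      rw [hg]
      rw [mul_pow, Real.sq_sqrt (hf0 x i), Real.sq_sqrt (hp_nonneg x)]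
    have hh2 : ∀ x, h x ^ 2 = fhat x i * p x := by
      intro x
      rw [hh]
      rw [mul_pow, Real.sq_sqrt (hfhat0 x i), Real.sq_sqrt (hp_nonneg x)]
    have hIg2 : Integrable (fun x => g x ^ 2) μ := by
      simpa only [hg2] using hIf i
    have hIh2 : Integrable (fun x => h x ^ 2) μ := by
      simpa only [hh2] using hIfhat i
    have hcs := integral_mul_le_sqrt_mul_sqrt' μ g h
      (fun x => mul_nonneg (Real.sqrt_nonneg _) (Real.sqrt_nonneg _))
      (fun x => mul_nonneg (Real.sqrt_nonneg _) (Real.sqrt_nonneg _))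
      hIg2 hIh2 (hIcross i)
    have hAa : ∫ x, g x ^ 2 ∂μ = a i := by
      rw [ha i]; exact integral_congr_ae (Filter.Eventually.of_forall fun x => hg2 x)
    have hBb : ∫ x, h x ^ 2 ∂μ = b i := by
      rw [hb i]; exact integral_congr_ae (Filter.Eventually.of_forall fun x => hh2 x)
    rw [hAa, hBb] at hcs
    -- compute the RHS integral
    have hrhs : ∫ x, (Real.sqrt (f x i) - Real.sqrt (fhat x i)) ^ 2 * p x ∂μ
        = a i + b i - 2 * ∫ x, g x * h x ∂μ := by
      have : (fun x => (Real.sqrt (f x i) - Real.sqrt (fhat x i)) ^ 2 * p x)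
          = fun x => f x i * p x + fhat x i * p x - 2 * (g x * h x) := by
        funext x; exact hsq_expand i x
      have hI1 : Integrable (fun x => f x i * p x + fhat x i * p x) μ :=
        (hIf i).add (hIfhat i)
      rw [this, integral_sub hI1 ((hIcross i).const_mul 2),
        integral_add (hIf i) (hIfhat i), integral_const_mul, ha i, hb i]
    rw [hrhs]
    have ha0 : 0 ≤ a i := by
      rw [ha i]
      exact integral_nonneg fun x => mul_nonneg (hf0 x i) (hp_nonneg x)
    have hb0 : 0 ≤ b i := by
      rw [hb i]
      exact integral_nonneg fun x => mul_nonneg (hfhat0 x i) (hp_nonneg x)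
    have hsa : Real.sqrt (a i) ^ 2 = a i := Real.sq_sqrt ha0
    have hsb : Real.sqrt (b i) ^ 2 = b i := Real.sq_sqrt hb0
    nlinarith [hcs, hsa, hsb]
  -- sum up
  have hsum_int : ∫ x, (2 * ∑ i, (Real.sqrt (f x i) - Real.sqrt (fhat x i)) ^ 2) * p x ∂μ
      = 2 * ∑ i, ∫ x, (Real.sqrt (f x i) - Real.sqrt (fhat x i)) ^ 2 * p x ∂μ := by
    have : (fun x => (2 * ∑ i, (Real.sqrt (f x i) - Real.sqrt (fhat x i)) ^ 2) * p x)
        = fun x => 2 * ∑ i, (Real.sqrt (f x i) - Real.sqrt (fhat x i)) ^ 2 * p x := by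
      funext x
      rw [mul_assoc, Finset.sum_mul]
    rw [this, integral_const_mul, integral_finset_sum _ (fun i _ => hIterm i)]
  have main : 2 * ∑ i, (Real.sqrt (a i) - Real.sqrt (b i)) ^ 2
      ≤ ∫ x, (2 * ∑ i, (Real.sqrt (f x i) - Real.sqrt (fhat x i)) ^ 2) * p x ∂μ := by
    rw [hsum_int]
    have := Finset.sum_le_sum (fun i (_ : i ∈ Finset.univ) => hkey i)
    linarith
  have habeq : ∀ i, a i = ∫ x, f x i * p x ∂μ := ha
  constructor
  · -- first conjunct
    apply Real.sqrt_le_sqrt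
    have hflip : (fun x => (2 * ∑ i, (Real.sqrt (fhat x i) - Real.sqrt (f x i)) ^ 2) * p x)
        = fun x => (2 * ∑ i, (Real.sqrt (f x i) - Real.sqrt (fhat x i)) ^ 2) * p x := by
      funext x
      congr 2
      apply Finset.sum_congr rfl
      intro i _
      ring
    rw [hflip]
    exact main
  · -- second conjunct
    have : ∀ i, (Real.sqrt (∫ x, f x i * p x ∂μ) - Real.sqrt (∫ x, fhat x i * p x ∂μ)) ^ 2
        = (Real.sqrt (a i) - Real.sqrt (b i)) ^ 2 := by
      intro i; rw [ha i, hb i]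
    simp only [this]
    exact main
end

section
/- Let P^{S,1}, …, P^{S,K} be probability measures on X with densities p^{S,i} w.r.t. a σ-finite measure μ, let π = (π_1,…,π_K) be a probability vector, and let f^{S,i}, f̂ : X → Y_Δ be measurable labeling functions. Define the mixture label marginals a, b ∈ Y_Δ by a_y = Σ_{i=1}^K π_i ∫ f^{S,i}(x, y) p^{S,i}(x) dμ(x) and b_y = Σ_{i=1}^K π_i ∫ f̂(x, y) p^{S,i}(x) dμ(x). Then d_{1/2}(a, b) ≤ [ Σ_{i=1}^K π_i L(f̂, f^{S,i}, P^{S,i}) ]^{1/2}, where the loss is the Hellinger loss. -/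
/-!
Writing `(√u - √v)² = u + v - 2 √u √v`, the claim reduces to lower bounds on the affinities
`Σ √u √v`. For nonnegative integrable `F, G` the Cauchy–Schwarz inequality
`∫ √F √G ≤ √(∫ F) √(∫ G)` gives `(√(∫ F) - √(∫ G))² ≤ ∫ (√F - √G)²`. Applied once to the
integrals against each `p^{S,i}` (with `F = f^{S,i}(·, y) p^{S,i}`, `G = f̂(·, y) p^{S,i}`) and once
to the counting measure on the sources (weighted by `π`), it bounds each class term of
`d_{1/2}(a, b)²` by the corresponding class term of the mixed loss.
-/

open MeasureTheory

lemma sq_sqrt_sub_sqrt_le_of_le {A B s : ℝ} (hA : 0 ≤ A) (hB : 0 ≤ B) (hs : s ≤ √A * √B) :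
    (√A - √B) ^ 2 ≤ A + B - 2 * s := by
  nlinarith [Real.sq_sqrt hA, Real.sq_sqrt hB]

lemma sq_sqrt_sub_sqrt {u v : ℝ} (hu : 0 ≤ u) (hv : 0 ≤ v) :
    (√u - √v) ^ 2 = u + v - 2 * (√u * √v) := by
  linear_combination Real.sq_sqrt hu + Real.sq_sqrt hv

lemma sq_sqrt_mul_sub_sqrt_mul_s15 {u v p : ℝ} (hu : 0 ≤ u) (hv : 0 ≤ v) (hp : 0 ≤ p) :
    (√(u * p) - √(v * p)) ^ 2 = (√u - √v) ^ 2 * p := by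
  rw [Real.sqrt_mul hu, Real.sqrt_mul hv, ← sub_mul, mul_pow, Real.sq_sqrt hp]

section
variable {X : Type*} [MeasurableSpace X] {μ : Measure X} {F G : X → ℝ}

lemma memLp_two_sqrt (hF0 : 0 ≤ᵐ[μ] F) (hF : Integrable F μ) :
    MemLp (fun x => √(F x)) 2 μ :=
  (memLp_two_iff_integrable_sq hF.aestronglyMeasurable.aemeasurable.sqrt.aestronglyMeasurable).2 <|
    hF.congr (hF0.mono fun _ hx => (Real.sq_sqrt hx).symm)

lemma integral_sqrt_mul_sqrt_le_s15 (hF0 : 0 ≤ᵐ[μ] F) (hG0 : 0 ≤ᵐ[μ] G)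
    (hF : Integrable F μ) (hG : Integrable G μ) :
    ∫ x, √(F x) * √(G x) ∂μ ≤ √(∫ x, F x ∂μ) * √(∫ x, G x ∂μ) := by
  have hsq : ∀ {H : X → ℝ}, 0 ≤ᵐ[μ] H → ∫ x, √(H x) ^ (2 : ℝ) ∂μ = ∫ x, H x ∂μ := fun hH0 =>
    integral_congr_ae (hH0.mono fun x hx => by simp [Real.sq_sqrt hx])
  have h := integral_mul_le_Lp_mul_Lq_of_nonneg Real.HolderConjugate.two_two
    (ae_of_all _ fun _ => Real.sqrt_nonneg _) (ae_of_all _ fun _ => Real.sqrt_nonneg _)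
    (by simpa using memLp_two_sqrt hF0 hF) (by simpa using memLp_two_sqrt hG0 hG)
  rwa [hsq hF0, hsq hG0, ← Real.sqrt_eq_rpow, ← Real.sqrt_eq_rpow] at h

lemma integrable_sq_sqrt_sub_sqrt_s15 (hF0 : 0 ≤ᵐ[μ] F) (hG0 : 0 ≤ᵐ[μ] G)
    (hF : Integrable F μ) (hG : Integrable G μ) :
    Integrable (fun x => (√(F x) - √(G x)) ^ 2) μ :=
  ((memLp_two_sqrt hF0 hF).sub (memLp_two_sqrt hG0 hG)).integrable_sq

/-- The reverse triangle inequality `|‖√F‖₂ - ‖√G‖₂| ≤ ‖√F - √G‖₂` in `L²(μ)`. -/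
lemma sq_sqrt_integral_sub_sqrt_integral_le_s15 (hF0 : 0 ≤ᵐ[μ] F) (hG0 : 0 ≤ᵐ[μ] G)
    (hF : Integrable F μ) (hG : Integrable G μ) :
    (√(∫ x, F x ∂μ) - √(∫ x, G x ∂μ)) ^ 2 ≤ ∫ x, (√(F x) - √(G x)) ^ 2 ∂μ := by
  have hFG : Integrable (fun x => √(F x) * √(G x)) μ :=
    (memLp_two_sqrt hF0 hF).integrable_mul (memLp_two_sqrt hG0 hG)
  have hexpand : ∫ x, (√(F x) - √(G x)) ^ 2 ∂μ
      = ∫ x, F x ∂μ + ∫ x, G x ∂μ - 2 * ∫ x, √(F x) * √(G x) ∂μ := by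
    rw [integral_congr_ae (hF0.mp (hG0.mono fun x hGx hFx => sq_sqrt_sub_sqrt hFx hGx)),
      integral_sub (f := fun x => F x + G x) (hF.add hG) (hFG.const_mul 2), integral_add hF hG,
      integral_const_mul]
  rw [hexpand]
  exact sq_sqrt_sub_sqrt_le_of_le (integral_nonneg_of_ae hF0) (integral_nonneg_of_ae hG0)
    (integral_sqrt_mul_sqrt_le_s15 hF0 hG0 hF hG)

end

lemma sq_sqrt_sum_sub_sqrt_sum_le_s15 {ι : Type*} [Fintype ι] {a b : ι → ℝ} (ha : 0 ≤ a) (hb : 0 ≤ b) :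
    (√(∑ i, a i) - √(∑ i, b i)) ^ 2 ≤ ∑ i, (√(a i) - √(b i)) ^ 2 := by
  let _ : MeasurableSpace ι := ⊤
  simpa using sq_sqrt_integral_sub_sqrt_integral_le_s15 (μ := Measure.count)
    (ae_of_all _ ha) (ae_of_all _ hb) .of_finite .of_finite

section
variable {X : Type*} [MeasurableSpace X] {μ : Measure X} {ι κ : Type*} [Fintype ι] [Fintype κ]
  {w : ι → ℝ}

lemma sq_sqrt_mixture_sub_sqrt_mixture_le (hw : 0 ≤ w) {F G : ι → X → ℝ}
    (hF0 : ∀ i, 0 ≤ᵐ[μ] F i) (hG0 : ∀ i, 0 ≤ᵐ[μ] G i)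
    (hF : ∀ i, Integrable (F i) μ) (hG : ∀ i, Integrable (G i) μ) :
    (√(∑ i, w i * ∫ x, F i x ∂μ) - √(∑ i, w i * ∫ x, G i x ∂μ)) ^ 2
      ≤ ∑ i, w i * ∫ x, (√(F i x) - √(G i x)) ^ 2 ∂μ :=
  calc _ ≤ ∑ i, (√(w i * ∫ x, F i x ∂μ) - √(w i * ∫ x, G i x ∂μ)) ^ 2 :=
        sq_sqrt_sum_sub_sqrt_sum_le_s15 (fun i => mul_nonneg (hw i) (integral_nonneg_of_ae (hF0 i)))
          (fun i => mul_nonneg (hw i) (integral_nonneg_of_ae (hG0 i)))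
    _ = ∑ i, w i * (√(∫ x, F i x ∂μ) - √(∫ x, G i x ∂μ)) ^ 2 := by
        refine Finset.sum_congr rfl fun i _ => ?_
        rw [Real.sqrt_mul (hw i), Real.sqrt_mul (hw i), ← mul_sub, mul_pow, Real.sq_sqrt (hw i)]
    _ ≤ _ := by
        gcongr with i
        · exact hw i
        · exact sq_sqrt_integral_sub_sqrt_integral_le_s15 (hF0 i) (hG0 i) (hF i) (hG i)

lemma sum_sq_sqrt_mixture_sub_sqrt_mixture_le (hw : 0 ≤ w) {F G : ι → X → κ → ℝ}
    (hF0 : ∀ i c, 0 ≤ᵐ[μ] fun x => F i x c) (hG0 : ∀ i c, 0 ≤ᵐ[μ] fun x => G i x c)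
    (hF : ∀ i c, Integrable (fun x => F i x c) μ) (hG : ∀ i c, Integrable (fun x => G i x c) μ) :
    ∑ c, (√(∑ i, w i * ∫ x, F i x c ∂μ) - √(∑ i, w i * ∫ x, G i x c ∂μ)) ^ 2
      ≤ ∑ i, w i * ∫ x, ∑ c, (√(F i x c) - √(G i x c)) ^ 2 ∂μ :=
  calc _ ≤ ∑ c, ∑ i, w i * ∫ x, (√(F i x c) - √(G i x c)) ^ 2 ∂μ :=
        Finset.sum_le_sum fun c _ =>
          sq_sqrt_mixture_sub_sqrt_mixture_le hw (fun i => hF0 i c) (fun i => hG0 i c)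
            (fun i => hF i c) (fun i => hG i c)
    _ = _ := by
        rw [Finset.sum_comm]
        refine Finset.sum_congr rfl fun i _ => ?_
        rw [integral_finsetSum _ fun c _ =>
          integrable_sq_sqrt_sub_sqrt_s15 (hF0 i c) (hG0 i c) (hF i c) (hG i c), Finset.mul_sum]

lemma integrable_apply_mul_of_mem_stdSimplex {f : X → κ → ℝ} (hf : Measurable f)
    (hfΔ : ∀ x, f x ∈ stdSimplex ℝ κ) {p : X → ℝ} (hp : Integrable p μ) (c : κ) :
    Integrable (fun x => f x c * p x) μ :=
  hp.bdd_mul (c := 1) (measurable_pi_apply c |>.comp hf).aestronglyMeasurable <|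
    ae_of_all _ fun x => by
      obtain ⟨hx0, hx1⟩ := mem_Icc_of_mem_stdSimplex (hfΔ x) c
      rwa [Real.norm_of_nonneg hx0]

end

theorem mixture_label_marginal_hellinger_le_loss_general
    {X : Type*} [MeasurableSpace X]
    (μ : Measure X)
    (K C : ℕ)
    (w : Fin K → ℝ) (hw_nonneg : ∀ i, 0 ≤ w i)
    (pS : Fin K → X → ℝ)
    (hpS_nonneg : ∀ i x, 0 ≤ pS i x)
    (hpS_prob : ∀ i, ∫ x, pS i x ∂μ = 1)
    (fS : Fin K → X → Fin C → ℝ) (fhat : X → Fin C → ℝ)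
    (hfS_meas : ∀ i, Measurable (fS i)) (hfhat_meas : Measurable fhat)
    (hfS_simplex : ∀ i x, fS i x ∈ stdSimplex ℝ (Fin C))
    (hfhat_simplex : ∀ x, fhat x ∈ stdSimplex ℝ (Fin C))
    (a b : Fin C → ℝ)
    (ha : ∀ y, a y = ∑ i, w i * ∫ x, fS i x y * pS i x ∂μ)
    (hb : ∀ y, b y = ∑ i, w i * ∫ x, fhat x y * pS i x ∂μ) :
    Real.sqrt (2 * ∑ y, (Real.sqrt (a y) - Real.sqrt (b y)) ^ 2)
      ≤ Real.sqrt (∑ i, w i *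
          ∫ x, (2 * ∑ c, (Real.sqrt (fhat x c) - Real.sqrt (fS i x c)) ^ 2)
            * pS i x ∂μ) := by
  have hpS_int : ∀ i, Integrable (pS i) μ := fun i =>
    .of_integral_ne_zero (by rw [hpS_prob i]; exact one_ne_zero)
  have hmarginals := sum_sq_sqrt_mixture_sub_sqrt_mixture_le (μ := μ) hw_nonneg
    (F := fun i x c => fS i x c * pS i x) (G := fun i x c => fhat x c * pS i x)
    (fun i c => ae_of_all _ fun x => mul_nonneg ((hfS_simplex i x).1 c) (hpS_nonneg i x))
    (fun i c => ae_of_all _ fun x => mul_nonneg ((hfhat_simplex x).1 c) (hpS_nonneg i x))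
    (fun i => integrable_apply_mul_of_mem_stdSimplex (hfS_meas i) (hfS_simplex i) (hpS_int i))
    (fun i => integrable_apply_mul_of_mem_stdSimplex hfhat_meas hfhat_simplex (hpS_int i))
  refine Real.sqrt_le_sqrt ?_
  calc 2 * ∑ y, (√(a y) - √(b y)) ^ 2
      ≤ 2 * ∑ i, w i * ∫ x, ∑ c, (√(fS i x c * pS i x) - √(fhat x c * pS i x)) ^ 2 ∂μ := by
        simp only [ha, hb]
        gcongr
    _ = _ := by
        rw [Finset.mul_sum]
        refine Finset.sum_congr rfl fun i _ => ?_
        rw [mul_left_comm, ← integral_const_mul]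
        congr 1
        refine integral_congr_ae (ae_of_all _ fun x => ?_)
        simp only [Finset.sum_mul, Finset.mul_sum]
        refine Finset.sum_congr rfl fun c _ => ?_
        rw [sq_sqrt_mul_sub_sqrt_mul_s15 ((hfS_simplex i x).1 c) ((hfhat_simplex x).1 c)
          (hpS_nonneg i x), sub_sq_comm, mul_assoc]

/-- **Lemma 13 (ii).** The Hellinger distance between the mixture label marginals
induced by the ground-truth labeling functions `f^{S,i}` and by the hypothesis `f̂`
is at most the square root of the π-weighted sum of the Hellinger-loss general
losses on the source domains. -/
theorem mixture_label_marginal_hellinger_le_loss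
    {X : Type*} [MeasurableSpace X]
    (μ : Measure X) [SigmaFinite μ]
    (K C : ℕ) (hK : 0 < K) (hC : 0 < C)
    (w : Fin K → ℝ) (hw_nonneg : ∀ i, 0 ≤ w i) (hw_sum : ∑ i, w i = 1)
    (pS : Fin K → X → ℝ)
    (hpS_meas : ∀ i, Measurable (pS i)) (hpS_nonneg : ∀ i x, 0 ≤ pS i x)
    (hpS_prob : ∀ i, ∫ x, pS i x ∂μ = 1)
    (fS : Fin K → X → Fin C → ℝ) (fhat : X → Fin C → ℝ)
    (hfS_meas : ∀ i, Measurable (fS i)) (hfhat_meas : Measurable fhat)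
    (hfS_simplex : ∀ i x, fS i x ∈ stdSimplex ℝ (Fin C))
    (hfhat_simplex : ∀ x, fhat x ∈ stdSimplex ℝ (Fin C))
    (a b : Fin C → ℝ)
    (ha : ∀ y, a y = ∑ i, w i * ∫ x, fS i x y * pS i x ∂μ)
    (hb : ∀ y, b y = ∑ i, w i * ∫ x, fhat x y * pS i x ∂μ) :
    Real.sqrt (2 * ∑ y, (Real.sqrt (a y) - Real.sqrt (b y)) ^ 2)
      ≤ Real.sqrt (∑ i, w i *
          ∫ x, (2 * ∑ c, (Real.sqrt (fhat x c) - Real.sqrt (fS i x c)) ^ 2)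
            * pS i x ∂μ) :=
  mixture_label_marginal_hellinger_le_loss_general μ K C w hw_nonneg pS hpS_nonneg hpS_prob fS fhat
    hfS_meas hfhat_meas hfS_simplex hfhat_simplex a b ha hb
end
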